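/- arXiv:1712.08546 — 9 statements merged into one kernel-verified Lean document; each statement's English description precedes it below -/
import Mathlib

section
/- Let I and K be finite index sets, a an I×K complex matrix, d a K×I complex matrix, and L the block anti-diagonal matrix [[0, a],[d, 0]] on I ⊕ K. Then det(1 + L) equals the sum, over all pairs of subsets S₊ ⊆ I, S₋ ⊆ K with |S₊| = |S₋|, of (−1)^{|S₊|} · det(a restricted to rows S₊ and columns S₋) · det(d restricted to rows S₋ and columns S₊). -/
/-!
Expanding `det (1 + L)` multilinearly in the rows gives the sum of all principal minors of `L`.
A subset of `I ⊕ K` is a pair `(S₊, S₋)`, and the principal minor of `L = [[0, a], [d, 0]]` on it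
is again block anti-diagonal, `[[0, a_{S₊S₋}], [d_{S₋S₊}, 0]]`. Such a determinant vanishes unless
`|S₊| = |S₋|`, and in the balanced case it equals `(-1)^{|S₊|} det a_{S₊S₋} det d_{S₋S₊}`, because
`[[0, A], [D, 0]] = J · [[D, 0], [0, -A]]` with `J` the standard symplectic matrix, of determinant 1.
-/

open Matrix Polynomial Finset

def Finset.disjSumEquiv {α β : Type*} (s : Finset α) (t : Finset β) : s.disjSum t ≃ s ⊕ t :=
  Equiv.subtypeSum.trans <| Equiv.sumCongr (Equiv.subtypeEquivRight fun _ ↦ inl_mem_disjSum)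
    (Equiv.subtypeEquivRight fun _ ↦ inr_mem_disjSum)

namespace Matrix

variable {l m n R : Type*} [DecidableEq l] [DecidableEq m] [DecidableEq n] [CommRing R]

theorem det_submatrix_disjSum_fromBlocks (A : Matrix m m R) (B : Matrix m n R)
    (C : Matrix n m R) (D : Matrix n n R) (s : Finset m) (t : Finset n) :
    det ((fromBlocks A B C D).submatrix ((↑) : s.disjSum t → m ⊕ n) (↑)) =
      det (fromBlocks (A.submatrix ((↑) : s → m) (↑)) (B.submatrix (↑) ((↑) : t → n))
        (C.submatrix (↑) (↑)) (D.submatrix (↑) (↑))) := by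
  rw [← det_submatrix_equiv_self (s.disjSumEquiv t).symm]
  congr 1
  ext (i | i) (j | j) <;> rfl

variable [Fintype l] [Fintype m] [Fintype n]

theorem det_one_add_eq_sum_det_submatrix (M : Matrix n n R) :
    det (1 + M) = ∑ s : Finset n, det (M.submatrix ((↑) : s → n) (↑)) := by
  calc det (1 + M) = detRowAlternating (M.row + (1 : Matrix n n R).row) := by
        rw [add_comm]; rfl
    _ = _ := by
      simp_rw [AlternatingMap.map_add_univ, ← det_piecewise_one_eq_submatrix_det]
      rfl

theorem det_fromBlocks_zero₁₁_zero₂₂ (A D : Matrix l l R) :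
    det (fromBlocks 0 A D 0) = (-1) ^ Fintype.card l * det A * det D := by
  have hJ : fromBlocks 0 A D 0 = J l R * fromBlocks D 0 0 (-A) := by
    simp [J, fromBlocks_multiply]
  rw [hJ, det_mul, SymplecticGroup.det_eq_one (SymplecticGroup.J_mem l R),
    det_fromBlocks_zero₂₁, det_neg]
  ring

theorem det_fromBlocks_zero₁₁_zero₂₂_of_equiv (em : m ≃ l) (en : n ≃ l)
    (A : Matrix m n R) (D : Matrix n m R) :
    det (fromBlocks 0 A D 0) = (-1) ^ Fintype.card l *
      det (A.submatrix em.symm en.symm) * det (D.submatrix en.symm em.symm) := by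
  rw [← det_fromBlocks_zero₁₁_zero₂₂, ← det_submatrix_equiv_self (em.symm.sumCongr en.symm)]
  congr 1
  ext (i | i) (j | j) <;> rfl

/-- Scaling the rows indexed by `m`, or the columns indexed by `n`, by `X` has the same effect,
so `X ^ card m * det = det * X ^ card n` in `R[X]`. -/
theorem det_fromBlocks_zero₁₁_zero₂₂_of_card_ne (A : Matrix m n R) (D : Matrix n m R)
    (h : Fintype.card m ≠ Fintype.card n) : det (fromBlocks 0 A D 0) = 0 := by
  set M := (fromBlocks 0 A D 0).map (C : R →+* R[X])
  have hM : fromBlocks ((X : R[X]) • 1) 0 0 1 * M = M * fromBlocks 1 0 0 ((X : R[X]) • 1) := by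
    simp [M, fromBlocks_map, fromBlocks_multiply]
  have hdet := congrArg (fun N ↦ coeff (det N) (Fintype.card m)) hM
  simp only [det_mul, det_fromBlocks_zero₂₁, det_smul, det_one, M, ← RingHom.mapMatrix_apply,
    ← RingHom.map_det] at hdet
  simpa [mul_comm (X ^ _), coeff_C_mul_X_pow, h] using hdet

end Matrix

/-- Combinatorial expansion of `det (1 + L)` for the block anti-diagonal matrix
`L = [[0, a], [d, 0]]` on `I ⊕ K`: a sum over pairs of subsets `S₊ ⊆ I`, `S₋ ⊆ K`
of equal cardinality of `(-1)^{|S₊|} · det(a_{S₊ S₋}) · det(d_{S₋ S₊})`. -/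
theorem det_one_add_blockAntidiag_combinatorial_expansion (I K : Type)
    [Fintype I] [Fintype K] [DecidableEq I] [DecidableEq K]
    (a : Matrix I K ℂ) (d : Matrix K I ℂ) :
    (1 + Matrix.fromBlocks 0 a d 0).det =
      ∑ Sp : Finset I, ∑ Sm : Finset K,
        if h : Sp.card = Sm.card then
          (-1 : ℂ) ^ Sp.card
            * (Matrix.of fun i j : Fin Sp.card =>
                a ((Sp.equivFin.symm i : I)) ((Sm.equivFin.symm (Fin.cast h j) : K))).det
            * (Matrix.of fun i j : Fin Sp.card =>
                d ((Sm.equivFin.symm (Fin.cast h i) : K)) ((Sp.equivFin.symm j : I))).det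
        else 0 := by
  rw [det_one_add_eq_sum_det_submatrix, ← sumEquiv.symm.toEquiv.sum_comp, Fintype.sum_prod_type]
  refine sum_congr rfl fun Sp _ ↦ sum_congr rfl fun Sm _ ↦ ?_
  refine (det_submatrix_disjSum_fromBlocks 0 a d 0 Sp Sm).trans ?_
  simp only [submatrix_zero, Pi.zero_apply]
  split_ifs with h
  · rw [det_fromBlocks_zero₁₁_zero₂₂_of_equiv Sp.equivFin (Sm.equivFin.trans (finCongr h.symm)),
      Fintype.card_fin]
    rfl
  · exact det_fromBlocks_zero₁₁_zero₂₂_of_card_ne _ _ (by simpa using h)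
end

section
/- Let V be a finite-dimensional complex vector space with direct sum decomposition V = V₊ ⊕ V₋, Π the projection onto V₊ along V₋, and Π₋ := 1 − Π. Let Ψ₊ be an invertible endomorphism of V preserving V₊ (i.e. Ψ₊(V₊) ⊆ V₊ and Ψ₊⁻¹(V₊) ⊆ V₊) and Ψ₋ an invertible endomorphism preserving V₋. Set J := Ψ₋⁻¹ ∘ Ψ₊, a := Ψ₊ ∘ Π ∘ Ψ₊⁻¹ − Π and d := Ψ₋ ∘ Π₋ ∘ Ψ₋⁻¹ − Π₋. Then det_V(1 + a + d) = det_{V₊}((Π ∘ J⁻¹ ∘ Π ∘ J) restricted to V₊). -/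
/-!
Since `Ψ₊` and `Ψ₊⁻¹` preserve `V₊`, the operator `a` maps `V` into `V₊` and vanishes on `V₊`;
likewise `d` with `V₋`. Hence `a² = d² = 0`, so `1 + a + d = (1 + a)(1 - ad)(1 + d)` with unipotent
outer factors. The middle factor preserves `V₊` and is the identity modulo `V₊`, so its determinant
is that of its restriction to `V₊`, where it is conjugate by `Ψ₊` to `Π J⁻¹ Π J`.
-/

open Module Submodule

section Determinant

variable {K V : Type*} [Field K] [AddCommGroup V] [Module K V] [FiniteDimensional K V]

theorem LinearMap.det_eq_det_restrict_of_sub_mem {W : Submodule K V} {f : End K V}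
    (hf : ∀ x ∈ W, f x ∈ W) (hsub : ∀ x, f x - x ∈ W) :
    LinearMap.det f = LinearMap.det (f.restrict hf) := by
  have hquot : W.mapQ W f hf = LinearMap.id := by
    ext x
    simpa [Submodule.Quotient.eq] using hsub x
  rw [LinearMap.det_eq_det_mul_det W f hf, hquot, LinearMap.det_id, mul_one]

theorem LinearMap.det_one_add_of_mul_self_eq_zero {f : End K V} (hf : f * f = 0) :
    LinearMap.det (1 + f) = 1 := by
  have hfix : ∀ x ∈ range f, (1 + f) x = x := by
    rintro _ ⟨y, rfl⟩
    simp [← Module.End.mul_apply, hf]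
  have hmaps : ∀ x ∈ range f, (1 + f) x ∈ range f := fun x hx => (hfix x hx).symm ▸ hx
  have hrestrict : (1 + f).restrict hmaps = LinearMap.id := by
    ext ⟨x, hx⟩
    simp [LinearMap.restrict_apply, hfix x hx]
  rw [LinearMap.det_eq_det_restrict_of_sub_mem hmaps (fun x => by simp), hrestrict,
    LinearMap.det_id]

end Determinant

theorem LinearMap.det_restrict_eq_of_conj {R M : Type*} [CommRing R] [AddCommGroup M] [Module R M]
    {W : Submodule R M} (e : M ≃ₗ[R] M) (he : ∀ x ∈ W, e x ∈ W) (he' : ∀ x ∈ W, e.symm x ∈ W)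
    {f g : End R M} (hf : ∀ x ∈ W, f x ∈ W) (hg : ∀ x ∈ W, g x ∈ W)
    (hfg : ∀ x ∈ W, f (e x) = e (g x)) :
    LinearMap.det (f.restrict hf) = LinearMap.det (g.restrict hg) := by
  have hmap : W.map (e : M →ₗ[R] M) = W :=
    le_antisymm (by rintro _ ⟨x, hx, rfl⟩; exact he x hx)
      (fun y hy => ⟨e.symm y, he' y hy, e.apply_symm_apply y⟩)
  let eW : W ≃ₗ[R] W := e.ofSubmodules W W hmap
  have hconj : f.restrict hf = eW.toLinearMap ∘ₗ g.restrict hg ∘ₗ eW.symm.toLinearMap := by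
    ext ⟨x, hx⟩
    simp [eW, LinearEquiv.ofSubmodules_apply, LinearEquiv.ofSubmodules_symm_apply,
      ← hfg _ (he' x hx)]
  rw [hconj, LinearMap.det_conj]

theorem one_add_add_eq_mul_mul_of_mul_self_eq_zero {R : Type*} [Ring R] {a d : R}
    (ha : a * a = 0) (hd : d * d = 0) : 1 + a + d = (1 + a) * (1 - a * d) * (1 + d) := by
  have h : (1 + a) * (1 - a * d) * (1 + d) =
      1 + a + d - a * a * d - a * (d * d) - a * a * (d * d) := by
    noncomm_ring
  simp [h, ha, hd]

theorem Submodule.isProj_projection {R M : Type*} [Ring R] [AddCommGroup M] [Module R M]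
    {p q : Submodule R M} (hpq : IsCompl p q) : LinearMap.IsProj p (p.projection q hpq) :=
  ⟨projection_apply_mem hpq, fun _ hx => projection_apply_of_mem_left hpq hx⟩

section CauchyPlemelj

variable {K V : Type*} [CommRing K] [AddCommGroup V] [Module K V]

def cauchyPlemelj (P : End K V) (Ψ : V ≃ₗ[K] V) : End K V :=
  Ψ.toLinearMap ∘ₗ P ∘ₗ Ψ.symm.toLinearMap - P

variable {W : Submodule K V} {P : End K V} {Ψ : V ≃ₗ[K] V}

theorem cauchyPlemelj_apply (x : V) : cauchyPlemelj P Ψ x = Ψ (P (Ψ.symm x)) - P x := rfl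

theorem cauchyPlemelj_mem (hP : LinearMap.IsProj W P) (hΨ : ∀ x ∈ W, Ψ x ∈ W) (x : V) :
    cauchyPlemelj P Ψ x ∈ W :=
  sub_mem (hΨ _ (hP.map_mem _)) (hP.map_mem x)

theorem cauchyPlemelj_apply_of_mem (hP : LinearMap.IsProj W P) (hΨ' : ∀ x ∈ W, Ψ.symm x ∈ W)
    {x : V} (hx : x ∈ W) : cauchyPlemelj P Ψ x = 0 := by
  rw [cauchyPlemelj_apply, hP.map_id _ (hΨ' x hx), hP.map_id x hx, Ψ.apply_symm_apply, sub_self]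

theorem cauchyPlemelj_mul_self (hP : LinearMap.IsProj W P) (hΨ : ∀ x ∈ W, Ψ x ∈ W)
    (hΨ' : ∀ x ∈ W, Ψ.symm x ∈ W) : cauchyPlemelj P Ψ * cauchyPlemelj P Ψ = 0 :=
  LinearMap.ext fun x => cauchyPlemelj_apply_of_mem hP hΨ' (cauchyPlemelj_mem hP hΨ x)

variable {Vp Vm : Submodule K V} (hc : IsCompl Vp Vm) {Ψp Ψm : V ≃ₗ[K] V}

theorem one_sub_cauchyPlemelj_mul_cauchyPlemelj_apply
    (hΨp' : ∀ x ∈ Vp, Ψp.symm x ∈ Vp) (hΨm : ∀ x ∈ Vm, Ψm x ∈ Vm) {y : V} (hy : y ∈ Vp) :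
    (1 - cauchyPlemelj (Vp.projection Vm hc) Ψp * cauchyPlemelj (Vm.projection Vp hc.symm) Ψm) y =
      Ψp (Vp.projection Vm hc (Ψp.symm (Ψm (Vp.projection Vm hc (Ψm.symm y))))) := by
  set P := Vp.projection Vm hc
  set Q := Vm.projection Vp hc.symm
  have hdy : cauchyPlemelj Q Ψm y = Ψm (Q (Ψm.symm y)) := by
    simp [cauchyPlemelj_apply, Q, projection_apply_of_mem_right hc.symm hy]
  have hady :
      cauchyPlemelj P Ψp (cauchyPlemelj Q Ψm y) = Ψp (P (Ψp.symm (Ψm (Q (Ψm.symm y))))) := by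
    rw [cauchyPlemelj_apply, hdy,
      projection_apply_of_mem_right hc (hΨm _ (projection_apply_mem _ _)), sub_zero]
  have hsplit : Ψm.symm y = P (Ψm.symm y) + Q (Ψm.symm y) :=
    (projection_add_projection_eq_self hc _).symm
  calc (1 - cauchyPlemelj P Ψp * cauchyPlemelj Q Ψm) y
      = Ψp (P (Ψp.symm y)) - Ψp (P (Ψp.symm (Ψm (Q (Ψm.symm y))))) := by
        rw [LinearMap.sub_apply, Module.End.mul_apply, hady,
          projection_apply_of_mem_left hc (hΨp' y hy), Ψp.apply_symm_apply, Module.End.one_apply]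
    _ = Ψp (P (Ψp.symm (Ψm (P (Ψm.symm y))))) := by
        rw [sub_eq_iff_eq_add, ← map_add, ← map_add, ← map_add, ← map_add, ← hsplit,
          Ψm.apply_symm_apply]

end CauchyPlemelj

/-- Finite-dimensional form of the Fredholm determinant representation
`τ[J] = det_{V₊}(Π J⁻¹ Π J) = det_V(1 + a + d)`, where `a = Ψ₊ Π Ψ₊⁻¹ - Π` and
`d = Ψ₋ Π₋ Ψ₋⁻¹ - Π₋` are the Cauchy–Plemelj operators and `J = Ψ₋⁻¹ ∘ Ψ₊`. -/
theorem det_one_add_cauchyPlemelj_eq_det_restrict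
    (V : Type) [AddCommGroup V] [Module ℂ V] [FiniteDimensional ℂ V]
    (Vp Vm : Submodule ℂ V) (hc : IsCompl Vp Vm)
    (Ψp Ψm : V ≃ₗ[ℂ] V)
    (hΨp : ∀ x ∈ Vp, Ψp x ∈ Vp) (hΨp' : ∀ x ∈ Vp, Ψp.symm x ∈ Vp)
    (hΨm : ∀ x ∈ Vm, Ψm x ∈ Vm) (hΨm' : ∀ x ∈ Vm, Ψm.symm x ∈ Vm)
    (P a d J Jinv : V →ₗ[ℂ] V)
    (hP : P = Vp.subtype ∘ₗ Vp.linearProjOfIsCompl Vm hc)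
    (hJ : J = Ψm.symm.toLinearMap ∘ₗ Ψp.toLinearMap)
    (hJinv : Jinv = Ψp.symm.toLinearMap ∘ₗ Ψm.toLinearMap)
    (ha : a = Ψp.toLinearMap ∘ₗ P ∘ₗ Ψp.symm.toLinearMap - P)
    (hd : d = Ψm.toLinearMap ∘ₗ (LinearMap.id - P) ∘ₗ Ψm.symm.toLinearMap - (LinearMap.id - P))
    (hmem : ∀ x ∈ Vp, (P ∘ₗ Jinv ∘ₗ P ∘ₗ J) x ∈ Vp) :
    LinearMap.det (LinearMap.id + a + d) =
      LinearMap.det ((P ∘ₗ Jinv ∘ₗ P ∘ₗ J).restrict hmem) := by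
  obtain rfl : P = Vp.projection Vm hc := hP
  subst hJ hJinv
  replace ha : a = cauchyPlemelj (Vp.projection Vm hc) Ψp := ha
  replace hd : d = cauchyPlemelj (Vm.projection Vp hc.symm) Ψm := by
    rw [hd, projection_eq_id_sub_projection hc]; rfl
  have haa : a * a = 0 := ha ▸ cauchyPlemelj_mul_self (isProj_projection hc) hΨp hΨp'
  have hdd : d * d = 0 := hd ▸ cauchyPlemelj_mul_self (isProj_projection hc.symm) hΨm hΨm'
  have had_mem : ∀ x, (a * d) x ∈ Vp := fun x =>
    ha ▸ cauchyPlemelj_mem (isProj_projection hc) hΨp _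
  have hmid : ∀ x ∈ Vp, (1 - a * d) x ∈ Vp := fun x hx => sub_mem hx (had_mem x)
  calc LinearMap.det (LinearMap.id + a + d)
      = LinearMap.det ((1 + a) * (1 - a * d) * (1 + d)) :=
        congrArg _ (one_add_add_eq_mul_mul_of_mul_self_eq_zero haa hdd)
    _ = LinearMap.det ((1 - a * d).restrict hmid) := by
        rw [map_mul, map_mul, LinearMap.det_one_add_of_mul_self_eq_zero haa,
          LinearMap.det_one_add_of_mul_self_eq_zero hdd, one_mul, mul_one,
          LinearMap.det_eq_det_restrict_of_sub_mem hmid fun x => by simpa using neg_mem (had_mem x)]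
    _ = _ := LinearMap.det_restrict_eq_of_conj Ψp hΨp hΨp' hmid hmem fun x hx => by
        simpa [ha, hd] using one_sub_cauchyPlemelj_mul_cauchyPlemelj_apply hc hΨp' hΨm (hΨp x hx)
end

section
/- Let V be a finite-dimensional complex vector space with direct sum decomposition V = V₊ ⊕ V₋, Π the projection onto V₊ along V₋ and Π₋ := 1 − Π. Let t ↦ Ψ₊(t), Ψ̄₊(t) be differentiable families of invertible endomorphisms of V preserving V₊, and t ↦ Ψ₋(t), Ψ̄₋(t) differentiable families of invertible endomorphisms preserving V₋, such that Ψ₋(t)⁻¹ ∘ Ψ₊(t) = Ψ̄₊(t) ∘ Ψ̄₋(t)⁻¹ =: J(t) for all t. Then τ(t) := det_{V₊}((Π ∘ J(t)⁻¹ ∘ Π ∘ J(t)) restricted to V₊) is nonzero for all t, and (d/dt) log τ(t) = Tr_V[ J⁻¹ (dJ/dt) ∘ ( Ψ₊⁻¹ΠΨ₊ − Π + Ψ̄₋Π₋Ψ̄₋⁻¹ − Π₋ ) ]. -/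
/-!
Write `c(X)` for the compression `Π X Π` of an operator to `V₊`. It is multiplicative on a product
`X Y` as soon as `Y` preserves `V₊` or `X` preserves `V₋`. Since the dual factorization gives
`J⁻¹ = Ψ̄₋ Ψ̄₊⁻¹`, this splits `τ = det c(Ψ̄₋) · det c(Ψ̄₊⁻¹) · det c(Ψ₋⁻¹) · det c(Ψ₊)` into
determinants of invertible operators on `V₊`. Jacobi's formula expresses each logarithmic derivative
as a trace on `V`, which block-triangularity reduces to `tr(Ψ₊'Ψ₊⁻¹Π)`, `-tr(Ψ₋'Ψ₋⁻¹Π)`,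
`-tr(Ψ̄₊⁻¹Ψ̄₊'Π)` and `tr(Ψ̄₋⁻¹Ψ̄₋'Π)`. On the other side, cyclicity collapses the trace in the formula
to `tr(J⁻¹J' Ψ₊⁻¹ΠΨ₊) - tr(J⁻¹J' Ψ̄₋ΠΨ̄₋⁻¹)`; expanding `J⁻¹J'` with the direct factorization in the
first term and with the dual one in the second yields the same four traces.
-/

namespace Matrix

open Finset

variable {𝕜 : Type*} [NontriviallyNormedField 𝕜] {𝔸 : Type*} [NormedCommRing 𝔸] [NormedAlgebra 𝕜 𝔸]
  {n : Type*} [Fintype n] [DecidableEq n]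

theorem hasDerivAt_det_of_eq_one {m : 𝕜 → Matrix n n 𝔸} {m' : Matrix n n 𝔸} {t : 𝕜}
    (hm : ∀ i j, HasDerivAt (fun s => m s i j) (m' i j) t) (h1 : m t = 1) :
    HasDerivAt (fun s => (m s).det) m'.trace t := by
  have hsum := HasDerivAt.fun_sum (u := univ) fun (σ : Equiv.Perm n) _ =>
    (HasDerivAt.fun_finsetProd (u := univ) fun i _ => hm (σ i) i).const_mul
      ((Equiv.Perm.sign σ : ℤ) : 𝔸)
  simp only [← det_apply'] at hsum
  refine hsum.congr_deriv ?_
  rw [Finset.sum_eq_single_of_mem 1 (mem_univ _)]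
  · simp [h1, trace, one_apply_eq]
  · intro σ _ hσ
    refine mul_eq_zero_of_right _ (Finset.sum_eq_zero fun i _ => ?_)
    -- a permutation moving no point other than `i` is the identity
    obtain ⟨j, hji, hσj⟩ : ∃ j, j ≠ i ∧ σ j ≠ j := by
      by_contra! hfix
      refine hσ (Equiv.Perm.card_support_le_one.1 ((card_le_card fun j hj => ?_).trans
        (card_singleton i).le))
      exact mem_singleton.2 (by_contra fun hji => Equiv.Perm.mem_support.1 hj (hfix j hji))
    rw [Finset.prod_eq_zero (mem_erase.2 ⟨hji, mem_univ j⟩) (by rw [h1]; exact one_apply_ne hσj),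
      zero_smul]

theorem hasDerivAt_det {m : 𝕜 → Matrix n n 𝔸} {m' w : Matrix n n 𝔸} {t : 𝕜}
    (hm : ∀ i j, HasDerivAt (fun s => m s i j) (m' i j) t) (hw : w * m t = 1) (hw' : m t * w = 1) :
    HasDerivAt (fun s => (m s).det) ((m t).det * (w * m').trace) t := by
  have hwm : ∀ i j, HasDerivAt (fun s => (w * m s) i j) ((w * m') i j) t := fun i j => by
    simpa only [mul_apply] using HasDerivAt.fun_sum fun k _ => (hm k j).const_mul (w i k)
  convert (hasDerivAt_det_of_eq_one hwm hw).const_mul (m t).det using 1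
  funext s
  rw [det_mul, ← mul_assoc, ← det_mul, hw', det_one, one_mul]

end Matrix

namespace ContinuousLinearMap

variable {W : Type*} [NormedAddCommGroup W] [NormedSpace ℂ W] [FiniteDimensional ℂ W]

theorem hasDerivAt_det {f : ℝ → W →L[ℂ] W} {f' g : W →L[ℂ] W} {t : ℝ}
    (hf : HasDerivAt f f' t) (hg : g * f t = 1) (hg' : f t * g = 1) :
    HasDerivAt (fun s => (f s).det) ((f t).det * LinearMap.trace ℂ W ↑(g * f')) t := by
  let b := Module.finBasis ℂ W
  let M : (W →L[ℂ] W) →ₗ[ℂ] Matrix (Fin _) (Fin _) ℂ :=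
    (LinearMap.toMatrix b b).toLinearMap ∘ₗ coeLM ℂ
  have hM : ∀ X Y, M (X * Y) = M X * M Y := fun X Y => LinearMap.toMatrix_mul b X Y
  have hentry : ∀ i j, HasDerivAt (fun s => M (f s) i j) (M f' i j) t := fun i j =>
    ((Matrix.entryLinearMap ℂ ℂ i j ∘ₗ M).toContinuousLinearMap.restrictScalars ℝ).hasFDerivAt
      |>.comp_hasDerivAt t hf
  have hM1 : M 1 = 1 := LinearMap.toMatrix_one b
  have hdet := Matrix.hasDerivAt_det hentry (by rw [← hM, hg, hM1]) (by rw [← hM, hg', hM1])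
  rw [LinearMap.trace_eq_matrix_trace ℂ b]
  rw [← hM] at hdet
  simpa only [M, LinearMap.coe_comp, LinearEquiv.coe_coe, Function.comp_apply, coeLM_apply,
    LinearMap.det_toMatrix] using hdet

theorem det_mul {R M : Type*} [CommRing R] [TopologicalSpace M] [AddCommGroup M] [Module R M]
    (f g : M →L[R] M) : (f * g).det = f.det * g.det :=
  LinearMap.det_comp (f : M →ₗ[R] M) g

theorem det_ne_zero_of_mul_eq_one {R M : Type*} [CommRing R] [Nontrivial R] [TopologicalSpace M]
    [AddCommGroup M] [Module R M] {f g : M →L[R] M} (h : f * g = 1) : f.det ≠ 0 :=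
  left_ne_zero_of_mul_eq_one (by rw [← det_mul, h]; exact LinearMap.det_id)

end ContinuousLinearMap

theorem HasDerivAt.units_inv {𝕜 : Type*} [NontriviallyNormedField 𝕜]
    {R : Type*} [NormedRing R] [HasSummableGeomSeries R] [NormedAlgebra 𝕜 R]
    {u : 𝕜 → Rˣ} {u' : R} {t : 𝕜} (hu : HasDerivAt (fun s => (u s : R)) u' t) :
    HasDerivAt (fun s => (↑(u s)⁻¹ : R)) (-(↑(u t)⁻¹ * u' * ↑(u t)⁻¹)) t := by
  have hinv : Ring.inverse ∘ (fun s => (u s : R)) = fun s => (↑(u s)⁻¹ : R) :=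
    funext fun s => Ring.inverse_unit (u s)
  simpa [hinv] using (hasFDerivAt_ringInverse (𝕜 := 𝕜) (u t)).comp_hasDerivAt t hu

theorem Units.inv_mul_eq_mul_inv_of_inv_mul_eq_mul_inv {R : Type*} [Monoid R] (A B C D : Rˣ)
    (h : (↑B⁻¹ * A : R) = C * ↑D⁻¹) : (↑A⁻¹ * B : R) = D * ↑C⁻¹ := by
  have hu : B⁻¹ * A = C * D⁻¹ := Units.ext (by simpa using h)
  simpa using congrArg (fun u : Rˣ => (↑u⁻¹ : R)) hu

section TraceAlgebra

variable {R M : Type*} [Ring R] {tr : R → M}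

theorem trace_mul_proj_mul_proj_of_mul_proj (htr : ∀ x y, tr (x * y) = tr (y * x)) {x y p : R}
    (hy : y * p = p * y * p) : tr (y * p * x * p) = tr (x * y * p) := by
  rw [htr, ← mul_assoc, ← mul_assoc, ← hy, htr, mul_assoc]

theorem trace_mul_proj_mul_proj_of_proj_mul (htr : ∀ x y, tr (x * y) = tr (y * x)) {x y p : R}
    (hy : p * y = p * y * p) : tr (y * p * x * p) = tr (y * x * p) := by
  rw [htr, ← mul_assoc, ← mul_assoc, ← hy, mul_assoc, htr]

theorem trace_widom_identity {F : Type*} [AddCommGroup M] [FunLike F R M]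
    [AddMonoidHomClass F R M] {tr : F} (htr : ∀ x y, tr (x * y) = tr (y * x)) (A B C D : Rˣ)
    {P A' B' C' D' J' : R} (hJ : (↑B⁻¹ * A : R) = C * ↑D⁻¹)
    (hdir : J' = -(↑B⁻¹ * B' * ↑B⁻¹) * A + ↑B⁻¹ * A')
    (hdual : J' = C' * ↑D⁻¹ + C * -(↑D⁻¹ * D' * ↑D⁻¹)) :
    tr (↑A⁻¹ * B * J' * (↑A⁻¹ * P * A - P + D * (1 - P) * ↑D⁻¹ - (1 - P))) =
      tr (A' * ↑A⁻¹ * P) - tr (B' * ↑B⁻¹ * P) - tr (↑C⁻¹ * C' * P) + tr (↑D⁻¹ * D' * P) := by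
  have hconj_dir : (A : R) * (↑A⁻¹ * B * J') * ↑A⁻¹ = A' * ↑A⁻¹ - B' * ↑B⁻¹ := by
    rw [hdir]
    simp only [mul_assoc, neg_mul, mul_add, mul_neg, Units.mul_inv_cancel_left, add_mul,
      Units.mul_inv, mul_one, sub_eq_add_neg]
    abel
  have hconj_dual : (↑D⁻¹ : R) * (↑A⁻¹ * B * J') * D = ↑C⁻¹ * C' - ↑D⁻¹ * D' := by
    rw [Units.inv_mul_eq_mul_inv_of_inv_mul_eq_mul_inv A B C D hJ, hdual]
    simp [mul_add, add_mul, mul_assoc, sub_eq_add_neg]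
  have hsplit : (↑A⁻¹ * P * A - P + D * (1 - P) * ↑D⁻¹ - (1 - P) : R) =
      ↑A⁻¹ * P * A - D * P * ↑D⁻¹ := by
    simp only [mul_sub, mul_one, sub_mul, Units.mul_inv]
    abel
  have hcyc : ∀ (X : R) (Y : Rˣ), tr (X * (↑Y⁻¹ * P * Y)) = tr (↑Y * X * ↑Y⁻¹ * P) := by
    intro X Y
    rw [show X * (↑Y⁻¹ * P * Y) = X * ↑Y⁻¹ * P * Y by simp only [mul_assoc], htr]
    simp only [mul_assoc]
  have hD := hcyc (↑A⁻¹ * B * J') D⁻¹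
  rw [inv_inv] at hD
  rw [hsplit, mul_sub, map_sub, hcyc, hD, hconj_dir, hconj_dual]
  simp only [sub_mul, map_sub]
  abel

end TraceAlgebra

theorem trace_widom_identity_of_hasDerivAt {R M F : Type*} [NormedRing R] [HasSummableGeomSeries R]
    [NormedAlgebra ℝ R] [AddCommGroup M] [FunLike F R M] [AddMonoidHomClass F R M] {tr : F}
    (htr : ∀ x y, tr (x * y) = tr (y * x)) {A B C D : ℝ → Rˣ} {A' B' C' D' : R} {t : ℝ}
    (hA : HasDerivAt (fun s => (A s : R)) A' t) (hB : HasDerivAt (fun s => (B s : R)) B' t)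
    (hC : HasDerivAt (fun s => (C s : R)) C' t) (hD : HasDerivAt (fun s => (D s : R)) D' t)
    (hfact : ∀ s, (↑(B s)⁻¹ * A s : R) = C s * ↑(D s)⁻¹) (P : R) :
    tr (↑(A t)⁻¹ * B t * deriv (fun s => (↑(B s)⁻¹ * A s : R)) t *
        (↑(A t)⁻¹ * P * A t - P + D t * (1 - P) * ↑(D t)⁻¹ - (1 - P))) =
      tr (A' * ↑(A t)⁻¹ * P) - tr (B' * ↑(B t)⁻¹ * P) - tr (↑(C t)⁻¹ * C' * P) +
        tr (↑(D t)⁻¹ * D' * P) := by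
  have hdir := (hB.units_inv.fun_mul hA).deriv
  have hdual := (hC.fun_mul hD.units_inv).deriv
  rw [← funext hfact] at hdual
  exact trace_widom_identity htr (A t) (B t) (C t) (D t) (hfact t) hdir hdual

section Compression

open ContinuousLinearMap

variable {V W : Type*} [NormedAddCommGroup V] [NormedSpace ℂ V]
  [NormedAddCommGroup W] [NormedSpace ℂ W]

variable (V) in
noncomputable def traceCLM : (V →L[ℂ] V) →ₗ[ℂ] ℂ :=
  LinearMap.trace ℂ V ∘ₗ coeLM ℂ

theorem traceCLM_mul_comm (X Y : V →L[ℂ] V) : traceCLM V (X * Y) = traceCLM V (Y * X) := by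
  simp only [traceCLM, LinearMap.coe_comp, Function.comp_apply, coeLM_apply, toLinearMap_mul,
    LinearMap.trace_mul_comm]

variable (r : V →L[ℂ] W) (i : W →L[ℂ] V)

/-- With `r ∘L i = 1`, `i ∘L r` is a projection and `compression r i X` is `X` compressed to its
range, read in `W`. -/
def compression (X : V →L[ℂ] V) : W →L[ℂ] W := r ∘L X ∘L i

theorem compression_mul_compression (X Y : V →L[ℂ] V) :
    compression r i X * compression r i Y = compression r i (X * (i ∘L r) * Y) := rfl

theorem trace_compression [FiniteDimensional ℂ V] [FiniteDimensional ℂ W] (Z : V →L[ℂ] V) :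
    LinearMap.trace ℂ W ↑(compression r i Z) = traceCLM V (Z * (i ∘L r)) :=
  LinearMap.trace_comp_comm' ((Z : V →ₗ[ℂ] V) ∘ₗ (i : W →ₗ[ℂ] V)) (r : V →ₗ[ℂ] W)

theorem hasDerivAt_compression {X : ℝ → V →L[ℂ] V} {X' : V →L[ℂ] V} {t : ℝ}
    (hX : HasDerivAt X X' t) :
    HasDerivAt (fun s => compression r i (X s)) (compression r i X') t :=
  ((compL ℂ W V W r ∘L (compL ℂ W V V).flip i).restrictScalars ℝ).hasFDerivAt.comp_hasDerivAt t hX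

variable {r i}

theorem compression_mul_of_range (hri : r ∘L i = 1) {X Y : V →L[ℂ] V}
    (hY : Y * (i ∘L r) = (i ∘L r) * Y * (i ∘L r)) :
    compression r i (X * Y) = compression r i X * compression r i Y := by
  rw [compression_mul_compression]
  ext w
  have hYw := congr($hY (i w))
  simp only [mul_apply_eq_comp, coe_comp, Function.comp_apply, ← comp_apply r i, hri,
    one_apply_eq_self] at hYw
  exact congrArg (fun v => r (X v)) hYw

theorem compression_mul_of_ker (hri : r ∘L i = 1) {X Y : V →L[ℂ] V}
    (hX : (i ∘L r) * X = (i ∘L r) * X * (i ∘L r)) :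
    compression r i (X * Y) = compression r i X * compression r i Y := by
  rw [compression_mul_compression]
  ext w
  have hXw := congr(r ($hX (Y (i w))))
  simp only [mul_apply_eq_comp, coe_comp, Function.comp_apply, ← comp_apply r i, hri,
    one_apply_eq_self] at hXw
  exact hXw

theorem compression_one (hri : r ∘L i = 1) : compression r i 1 = 1 := hri

theorem hasDerivAt_det_compression [FiniteDimensional ℂ V] [FiniteDimensional ℂ W]
    {X : ℝ → V →L[ℂ] V} {X' Y : V →L[ℂ] V} {t : ℝ} (hX : HasDerivAt X X' t)
    (hXY : compression r i (X t) * compression r i Y = 1)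
    (hYX : compression r i Y * compression r i (X t) = 1) :
    HasDerivAt (fun s => (compression r i (X s)).det)
      ((compression r i (X t)).det * traceCLM V (Y * (i ∘L r) * X' * (i ∘L r))) t := by
  have hdet := hasDerivAt_det (hasDerivAt_compression r i hX) hYX hXY
  rwa [compression_mul_compression, trace_compression] at hdet

theorem hasDerivAt_det_compression_of_range [FiniteDimensional ℂ V] [FiniteDimensional ℂ W]
    (hri : r ∘L i = 1) {u : ℝ → (V →L[ℂ] V)ˣ} {u' : V →L[ℂ] V} {t : ℝ}
    (hu : HasDerivAt (fun s => (u s : V →L[ℂ] V)) u' t)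
    (hP : u t * (i ∘L r) = (i ∘L r) * u t * (i ∘L r) ∧
      ↑(u t)⁻¹ * (i ∘L r) = (i ∘L r) * ↑(u t)⁻¹ * (i ∘L r)) :
    (compression r i (u t)).det ≠ 0 ∧ HasDerivAt (fun s => (compression r i (u s)).det)
      ((compression r i (u t)).det * traceCLM V (u' * ↑(u t)⁻¹ * (i ∘L r))) t := by
  have h₁ : compression r i (u t) * compression r i ↑(u t)⁻¹ = 1 := by
    rw [← compression_mul_of_range hri hP.2, Units.mul_inv, compression_one hri]
  have h₂ : compression r i ↑(u t)⁻¹ * compression r i (u t) = 1 := by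
    rw [← compression_mul_of_range hri hP.1, Units.inv_mul, compression_one hri]
  refine ⟨det_ne_zero_of_mul_eq_one h₁, ?_⟩
  have hdet := hasDerivAt_det_compression hu h₁ h₂
  rwa [trace_mul_proj_mul_proj_of_mul_proj (traceCLM_mul_comm (V := V)) hP.2] at hdet

theorem hasDerivAt_det_compression_of_ker [FiniteDimensional ℂ V] [FiniteDimensional ℂ W]
    (hri : r ∘L i = 1) {u : ℝ → (V →L[ℂ] V)ˣ} {u' : V →L[ℂ] V} {t : ℝ}
    (hu : HasDerivAt (fun s => (u s : V →L[ℂ] V)) u' t)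
    (hP : (i ∘L r) * u t = (i ∘L r) * u t * (i ∘L r) ∧
      (i ∘L r) * ↑(u t)⁻¹ = (i ∘L r) * ↑(u t)⁻¹ * (i ∘L r)) :
    (compression r i (u t)).det ≠ 0 ∧ HasDerivAt (fun s => (compression r i (u s)).det)
      ((compression r i (u t)).det * traceCLM V (↑(u t)⁻¹ * u' * (i ∘L r))) t := by
  have h₁ : compression r i (u t) * compression r i ↑(u t)⁻¹ = 1 := by
    rw [← compression_mul_of_ker hri hP.1, Units.mul_inv, compression_one hri]
  have h₂ : compression r i ↑(u t)⁻¹ * compression r i (u t) = 1 := by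
    rw [← compression_mul_of_ker hri hP.2, Units.inv_mul, compression_one hri]
  refine ⟨det_ne_zero_of_mul_eq_one h₁, ?_⟩
  have hdet := hasDerivAt_det_compression hu h₁ h₂
  rwa [trace_mul_proj_mul_proj_of_proj_mul (traceCLM_mul_comm (V := V)) hP.2] at hdet

theorem det_compression_mul_proj_mul (hri : r ∘L i = 1) {A B C D : V →L[ℂ] V}
    (hB : B * (i ∘L r) = (i ∘L r) * B * (i ∘L r)) (hD : D * (i ∘L r) = (i ∘L r) * D * (i ∘L r)) :
    (compression r i (A * B * (i ∘L r) * (C * D))).det =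
      (compression r i A).det * (compression r i B).det *
        ((compression r i C).det * (compression r i D).det) := by
  rw [← compression_mul_compression, compression_mul_of_range hri hB,
    compression_mul_of_range hri hD, det_mul, det_mul, det_mul]

theorem hasDerivAt_det_compression_jump [FiniteDimensional ℂ V] [FiniteDimensional ℂ W]
    (hri : r ∘L i = 1) {A B C D : ℝ → (V →L[ℂ] V)ˣ} {A' B' C' D' : V →L[ℂ] V} {t : ℝ}
    (hA : HasDerivAt (fun s => (A s : V →L[ℂ] V)) A' t)
    (hB : HasDerivAt (fun s => (B s : V →L[ℂ] V)) B' t)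
    (hC : HasDerivAt (fun s => (C s : V →L[ℂ] V)) C' t)
    (hD : HasDerivAt (fun s => (D s : V →L[ℂ] V)) D' t)
    (hAP : ∀ s, A s * (i ∘L r) = (i ∘L r) * A s * (i ∘L r) ∧
      ↑(A s)⁻¹ * (i ∘L r) = (i ∘L r) * ↑(A s)⁻¹ * (i ∘L r))
    (hBP : ∀ s, (i ∘L r) * B s = (i ∘L r) * B s * (i ∘L r) ∧
      (i ∘L r) * ↑(B s)⁻¹ = (i ∘L r) * ↑(B s)⁻¹ * (i ∘L r))
    (hCP : ∀ s, C s * (i ∘L r) = (i ∘L r) * C s * (i ∘L r) ∧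
      ↑(C s)⁻¹ * (i ∘L r) = (i ∘L r) * ↑(C s)⁻¹ * (i ∘L r))
    (hDP : ∀ s, (i ∘L r) * D s = (i ∘L r) * D s * (i ∘L r) ∧
      (i ∘L r) * ↑(D s)⁻¹ = (i ∘L r) * ↑(D s)⁻¹ * (i ∘L r)) :
    let τ := fun s => (compression r i (D s * ↑(C s)⁻¹ * (i ∘L r) * (↑(B s)⁻¹ * A s))).det
    τ t ≠ 0 ∧ HasDerivAt τ (τ t * (traceCLM V (A' * ↑(A t)⁻¹ * (i ∘L r)) -
      traceCLM V (B' * ↑(B t)⁻¹ * (i ∘L r)) - traceCLM V (↑(C t)⁻¹ * C' * (i ∘L r)) +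
        traceCLM V (↑(D t)⁻¹ * D' * (i ∘L r)))) t := by
  intro τ
  have hτ : τ = fun s => (compression r i (D s)).det * (compression r i ↑(C s)⁻¹).det *
      ((compression r i ↑(B s)⁻¹).det * (compression r i (A s)).det) :=
    funext fun s => det_compression_mul_proj_mul hri (hCP s).2 (hAP s).1
  obtain ⟨hD0, hDd⟩ := hasDerivAt_det_compression_of_ker hri hD (hDP t)
  obtain ⟨hC0, hCd⟩ := hasDerivAt_det_compression_of_range hri hC.units_inv (hCP t).symm
  obtain ⟨hB0, hBd⟩ := hasDerivAt_det_compression_of_ker hri hB.units_inv (hBP t).symm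
  obtain ⟨hA0, hAd⟩ := hasDerivAt_det_compression_of_range hri hA (hAP t)
  rw [hτ]
  refine ⟨mul_ne_zero (mul_ne_zero hD0 hC0) (mul_ne_zero hB0 hA0),
    ((hDd.fun_mul hCd).fun_mul (hBd.fun_mul hAd)).congr_deriv ?_⟩
  simp only [inv_inv, neg_mul, mul_neg, map_neg, mul_assoc, Units.inv_mul_cancel_left,
    Units.mul_inv_cancel_left]
  ring

end Compression

section Projection

variable {R V : Type*} [Ring R] [TopologicalSpace V] [AddCommGroup V] [Module R V]
  {Vp Vm : Submodule R V} {P : V →L[R] V}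

theorem mul_proj_eq_of_mapsTo_range (hP1 : ∀ x ∈ Vp, P x = x) (hPmem : ∀ x, P x ∈ Vp)
    {X : V →L[R] V} (hX : ∀ x ∈ Vp, X x ∈ Vp) : X * P = P * X * P := by
  ext x
  exact (hP1 _ (hX _ (hPmem x))).symm

theorem proj_mul_eq_of_mapsTo_ker (hc : IsCompl Vp Vm) (hP1 : ∀ x ∈ Vp, P x = x)
    (hP2 : ∀ x ∈ Vm, P x = 0) {X : V →L[R] V} (hX : ∀ x ∈ Vm, X x ∈ Vm) :
    P * X = P * X * P := by
  ext x
  obtain ⟨a, ha, b, hb, rfl⟩ := Submodule.mem_sup.1 (hc.sup_eq_top ▸ Submodule.mem_top (x := x))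
  simp [hP1 a ha, hP2 b hb, hP2 _ (hX b hb)]

end Projection

/-- Finite-dimensional form of Widom's differentiation formula: if the jump
`J(t) = Ψ₋(t)⁻¹ ∘ Ψ₊(t) = Ψ̄₊(t) ∘ Ψ̄₋(t)⁻¹` admits both the direct and the dual
factorization for all `t`, then `τ(t) = det_{V₊}(Π J⁻¹ Π J)` is nonvanishing and
`(d/dt) log τ = Tr[J⁻¹ J' (Ψ₊⁻¹ΠΨ₊ - Π + Ψ̄₋Π₋Ψ̄₋⁻¹ - Π₋)]`. -/
theorem widom_derivative_formula
    (V : Type) [NormedAddCommGroup V] [NormedSpace ℂ V] [FiniteDimensional ℂ V]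
    (Vp Vm : Submodule ℂ V) (hc : IsCompl Vp Vm)
    (P : V →L[ℂ] V) (hP1 : ∀ x ∈ Vp, P x = x) (hP2 : ∀ x ∈ Vm, P x = 0)
    (hPmem : ∀ x : V, P x ∈ Vp)
    (Ψp Ψpinv Ψm Ψminv Ψbp Ψbpinv Ψbm Ψbminv : ℝ → V →L[ℂ] V)
    (hinvp : ∀ t, Ψp t ∘L Ψpinv t = 1 ∧ Ψpinv t ∘L Ψp t = 1)
    (hinvm : ∀ t, Ψm t ∘L Ψminv t = 1 ∧ Ψminv t ∘L Ψm t = 1)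
    (hinvbp : ∀ t, Ψbp t ∘L Ψbpinv t = 1 ∧ Ψbpinv t ∘L Ψbp t = 1)
    (hinvbm : ∀ t, Ψbm t ∘L Ψbminv t = 1 ∧ Ψbminv t ∘L Ψbm t = 1)
    (hpres_p : ∀ t, (∀ x ∈ Vp, Ψp t x ∈ Vp) ∧ (∀ x ∈ Vp, Ψpinv t x ∈ Vp))
    (hpres_bp : ∀ t, (∀ x ∈ Vp, Ψbp t x ∈ Vp) ∧ (∀ x ∈ Vp, Ψbpinv t x ∈ Vp))
    (hpres_m : ∀ t, (∀ x ∈ Vm, Ψm t x ∈ Vm) ∧ (∀ x ∈ Vm, Ψminv t x ∈ Vm))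
    (hpres_bm : ∀ t, (∀ x ∈ Vm, Ψbm t x ∈ Vm) ∧ (∀ x ∈ Vm, Ψbminv t x ∈ Vm))
    (hdiff : Differentiable ℝ Ψp ∧ Differentiable ℝ Ψm ∧
      Differentiable ℝ Ψbp ∧ Differentiable ℝ Ψbm)
    (hfact : ∀ t, Ψminv t ∘L Ψp t = Ψbp t ∘L Ψbminv t)
    (J Jinv : ℝ → V →L[ℂ] V)
    (hJ : ∀ t, J t = Ψminv t ∘L Ψp t) (hJinv : ∀ t, Jinv t = Ψpinv t ∘L Ψm t)
    (hmem : ∀ t, ∀ x ∈ Vp, (P ∘L Jinv t ∘L P ∘L J t) x ∈ Vp)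
    (τ : ℝ → ℂ)
    (hτ : ∀ t, τ t =
      LinearMap.det ((P ∘L Jinv t ∘L P ∘L J t : V →L[ℂ] V).toLinearMap.restrict (hmem t))) :
    ∀ t : ℝ, τ t ≠ 0 ∧
      HasDerivAt τ
        (LinearMap.trace ℂ V
          ((Jinv t ∘L deriv J t ∘L
            ((Ψpinv t ∘L P ∘L Ψp t) - P +
              (Ψbm t ∘L (1 - P) ∘L Ψbminv t) - (1 - P))).toLinearMap) * τ t) t := by
  intro t
  obtain ⟨hdp, hdm, hdbp, hdbm⟩ := hdiff
  set r := P.codRestrict Vp hPmem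
  set i := Vp.subtypeL
  have hri : r ∘L i = 1 := by ext x; simp [r, i, hP1 _ x.2]
  have hVp : ∀ {X : V →L[ℂ] V}, (∀ x ∈ Vp, X x ∈ Vp) → X * (i ∘L r) = (i ∘L r) * X * (i ∘L r) :=
    mul_proj_eq_of_mapsTo_range hP1 hPmem
  have hVm : ∀ {X : V →L[ℂ] V}, (∀ x ∈ Vm, X x ∈ Vm) → (i ∘L r) * X = (i ∘L r) * X * (i ∘L r) :=
    proj_mul_eq_of_mapsTo_ker hc hP1 hP2
  let A : ℝ → (V →L[ℂ] V)ˣ := fun s => ⟨_, _, (hinvp s).1, (hinvp s).2⟩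
  let B : ℝ → (V →L[ℂ] V)ˣ := fun s => ⟨_, _, (hinvm s).1, (hinvm s).2⟩
  let C : ℝ → (V →L[ℂ] V)ˣ := fun s => ⟨_, _, (hinvbp s).1, (hinvbp s).2⟩
  let D : ℝ → (V →L[ℂ] V)ˣ := fun s => ⟨_, _, (hinvbm s).1, (hinvbm s).2⟩
  have hτ' : τ = fun s =>
      (compression r i (D s * ↑(C s)⁻¹ * (i ∘L r) * (↑(B s)⁻¹ * A s))).det := funext fun s => by
    have hτs : τ s = (compression r i (Jinv s * (i ∘L r) * J s)).det := by rw [hτ s]; rfl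
    rw [hτs, show Jinv s = D s * ↑(C s)⁻¹ from (hJinv s).trans
      (Units.inv_mul_eq_mul_inv_of_inv_mul_eq_mul_inv (A s) (B s) (C s) (D s) (hfact s)),
      show J s = ↑(B s)⁻¹ * A s from hJ s]
  obtain ⟨hτ0, hτd⟩ := hasDerivAt_det_compression_jump hri (A := A) (B := B) (C := C) (D := D)
    (hdp t).hasDerivAt (hdm t).hasDerivAt (hdbp t).hasDerivAt (hdbm t).hasDerivAt
    (fun s => ⟨hVp (hpres_p s).1, hVp (hpres_p s).2⟩)
    (fun s => ⟨hVm (hpres_m s).1, hVm (hpres_m s).2⟩)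
    (fun s => ⟨hVp (hpres_bp s).1, hVp (hpres_bp s).2⟩)
    (fun s => ⟨hVm (hpres_bm s).1, hVm (hpres_bm s).2⟩)
  rw [hτ']
  refine ⟨hτ0, hτd.congr_deriv ?_⟩
  rw [mul_comm, hJinv t, show J = fun s => ↑(B s)⁻¹ * ↑(A s) from funext hJ]
  congr 1
  exact (trace_widom_identity_of_hasDerivAt traceCLM_mul_comm (A := A) (B := B) (C := C) (D := D)
    (hdp t).hasDerivAt (hdm t).hasDerivAt (hdbp t).hasDerivAt (hdbm t).hasDerivAt hfact
    (i ∘L r)).symm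
end

section
/- Let V be a complex vector space with direct sum decomposition V = V₊ ⊕ V₋ and Π the projection onto V₊ along V₋. Let Ψ̄₊ be an invertible endomorphism of V preserving V₊ (i.e. Ψ̄₊(V₊) ⊆ V₊ and Ψ̄₊⁻¹(V₊) ⊆ V₊) and Ψ̄₋ an invertible endomorphism preserving V₋, and set J := Ψ̄₊ ∘ Ψ̄₋⁻¹. Then the endomorphism P of V₊ given by P := (Π ∘ J⁻¹) restricted to V₊ is bijective, and its inverse is (Ψ̄₊ ∘ Π ∘ Ψ̄₋⁻¹) restricted to V₊ (which indeed maps V₊ to V₊). -/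
/-!
An endomorphism `f` with `f V₋ ⊆ V₋` satisfies `Π f Π = Π f`, because `x - Π x ∈ V₋ = ker Π`.
Applied to `Ψ̄₋` and `Ψ̄₋⁻¹`, this removes the inner `Π` from `Q P J⁻¹` and `P J⁻¹ Q`; the
`Ψ̄₋`-factors then cancel, and what is left is the identity on `V₊` because `Ψ̄₊⁻¹` preserves `V₊`.
-/

namespace Submodule

variable {R E : Type*} [Ring R] [AddCommGroup E] [Module R E] {p q : Submodule R E}

theorem projection_map_projection_of_mapsTo (h : IsCompl p q) {f : E →ₗ[R] E}
    (hf : ∀ x ∈ q, f x ∈ q) (x : E) :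
    p.projection q h (f (p.projection q h x)) = p.projection q h (f x) := by
  rw [← sub_eq_zero, ← map_sub, ← map_sub, projection_apply_eq_zero_iff, ← neg_sub, map_neg]
  exact q.neg_mem (hf _ (sub_projection_mem h x))

theorem projection_conj_projection_of_mapsTo (h : IsCompl p q) (e : E ≃ₗ[R] E)
    (he : ∀ x ∈ q, e x ∈ q) {x : E} (hx : x ∈ p) :
    p.projection q h (e (p.projection q h (e.symm x))) = x := by
  calc p.projection q h (e (p.projection q h (e.symm x)))
      = p.projection q h (e (e.symm x)) :=
        projection_map_projection_of_mapsTo h (f := e.toLinearMap) he _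
    _ = x := by rw [LinearEquiv.apply_symm_apply, projection_apply_of_mem_left h hx]

end Submodule

/-- If the dual Riemann–Hilbert factorization `J = Ψ̄₊ ∘ Ψ̄₋⁻¹` exists, then the operator
`P = Π ∘ J⁻¹` is bijective on `V₊` with inverse `Ψ̄₊ ∘ Π ∘ Ψ̄₋⁻¹` (which maps `V₊` to `V₊`). -/
theorem dual_factorization_inverse_of_projected_Jinv
    (V : Type) [AddCommGroup V] [Module ℂ V]
    (Vp Vm : Submodule ℂ V) (hc : IsCompl Vp Vm)
    (Ψbp Ψbm : V ≃ₗ[ℂ] V)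
    (hbp : ∀ x ∈ Vp, Ψbp x ∈ Vp) (hbp' : ∀ x ∈ Vp, Ψbp.symm x ∈ Vp)
    (hbm : ∀ x ∈ Vm, Ψbm x ∈ Vm) (hbm' : ∀ x ∈ Vm, Ψbm.symm x ∈ Vm)
    (P Jinv Q : V →ₗ[ℂ] V)
    (hP : P = Vp.subtype ∘ₗ Vp.linearProjOfIsCompl Vm hc)
    (hJinv : Jinv = Ψbm.toLinearMap ∘ₗ Ψbp.symm.toLinearMap)
    (hQ : Q = Ψbp.toLinearMap ∘ₗ P ∘ₗ Ψbm.symm.toLinearMap) :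
    (∀ x ∈ Vp, Q x ∈ Vp) ∧
    Function.Bijective (fun x : Vp => Vp.linearProjOfIsCompl Vm hc (Jinv x)) ∧
    (∀ x ∈ Vp, Q (P (Jinv x)) = x) ∧
    (∀ x ∈ Vp, P (Jinv (Q x)) = x) := by
  subst hP hJinv hQ
  have hQ_mem (x : V) : Ψbp (Vp.projection Vm hc (Ψbm.symm x)) ∈ Vp :=
    hbp _ (Submodule.projection_apply_mem hc _)
  have left_inv (x : V) (hx : x ∈ Vp) :
      Ψbp (Vp.projection Vm hc (Ψbm.symm (Vp.projection Vm hc (Ψbm (Ψbp.symm x))))) = x := by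
    have h := Submodule.projection_conj_projection_of_mapsTo hc Ψbm.symm hbm' (hbp' x hx)
    rw [LinearEquiv.symm_symm] at h
    rw [h, LinearEquiv.apply_symm_apply]
  have right_inv (x : V) (hx : x ∈ Vp) :
      Vp.projection Vm hc (Ψbm (Ψbp.symm (Ψbp (Vp.projection Vm hc (Ψbm.symm x))))) = x := by
    rw [LinearEquiv.symm_apply_apply,
      Submodule.projection_conj_projection_of_mapsTo hc Ψbm hbm hx]
  refine ⟨fun x _ => hQ_mem x, ?_, left_inv, right_inv⟩
  exact Function.bijective_iff_has_inverse.2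
    ⟨fun x => ⟨_, hQ_mem x⟩, fun x => Subtype.ext (left_inv x x.2),
      fun x => Subtype.ext (right_inv x x.2)⟩
end

section
/- Let V be a complex vector space with direct sum decomposition V = V₊ ⊕ V₋ and Π the projection onto V₊ along V₋. Let Ψ₊ be an invertible endomorphism of V preserving V₊ (i.e. Ψ₊(V₊) ⊆ V₊ and Ψ₊⁻¹(V₊) ⊆ V₊) and Ψ₋ an invertible endomorphism preserving V₋, and set J := Ψ₋⁻¹ ∘ Ψ₊. Then the endomorphism Q of V₊ given by Q := (Π ∘ J) restricted to V₊ is bijective, and its inverse is (Ψ₊⁻¹ ∘ Π ∘ Ψ₋) restricted to V₊ (which indeed maps V₊ to V₊). -/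
/-!
Write `π` for the projection onto `V₊` along `V₋`. If `T` maps `V₋` into itself then
`π ∘ T ∘ π = π ∘ T`, because `T` sends the `V₋`-component `x - π x` into `ker π`. Applied to
`T = Ψ₋` and `T = Ψ₋⁻¹`, this cancels the middle projection in `(Ψ₊⁻¹ π Ψ₋) π (Ψ₋⁻¹ Ψ₊)` and in
`π (Ψ₋⁻¹ Ψ₊) (Ψ₊⁻¹ π Ψ₋)`, leaving `Ψ₊⁻¹ π Ψ₊` and `π`, both the identity on `V₊`.
-/

namespace Submodule

variable {R E : Type*} [Ring R] [AddCommGroup E] [Module R E] {p q : Submodule R E}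

theorem projection_apply_apply_projection_of_mapsTo (hpq : IsCompl p q) {F : Type*}
    [FunLike F E E] [LinearMapClass F R E E] {T : F} (hT : Set.MapsTo T q q) (x : E) :
    p.projection q hpq (T (p.projection q hpq x)) = p.projection q hpq (T x) := by
  have h : p.projection q hpq (T (x - p.projection q hpq x)) = 0 :=
    projection_apply_of_mem_right hpq (hT (sub_projection_mem hpq x))
  rwa [map_sub, map_sub, sub_eq_zero, eq_comm] at h

end Submodule

open Submodule in
/-- If the direct Riemann–Hilbert factorization `J = Ψ₋⁻¹ ∘ Ψ₊` exists, then the operator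
`Q = Π ∘ J` is bijective on `V₊` with inverse `Ψ₊⁻¹ ∘ Π ∘ Ψ₋` (which maps `V₊` to `V₊`). -/
theorem direct_factorization_inverse_of_projected_J
    (V : Type) [AddCommGroup V] [Module ℂ V]
    (Vp Vm : Submodule ℂ V) (hc : IsCompl Vp Vm)
    (Ψp Ψm : V ≃ₗ[ℂ] V)
    (hp : ∀ x ∈ Vp, Ψp x ∈ Vp) (hp' : ∀ x ∈ Vp, Ψp.symm x ∈ Vp)
    (hm : ∀ x ∈ Vm, Ψm x ∈ Vm) (hm' : ∀ x ∈ Vm, Ψm.symm x ∈ Vm)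
    (P J R : V →ₗ[ℂ] V)
    (hP : P = Vp.subtype ∘ₗ Vp.linearProjOfIsCompl Vm hc)
    (hJ : J = Ψm.symm.toLinearMap ∘ₗ Ψp.toLinearMap)
    (hR : R = Ψp.symm.toLinearMap ∘ₗ P ∘ₗ Ψm.toLinearMap) :
    (∀ x ∈ Vp, R x ∈ Vp) ∧
    Function.Bijective (fun x : Vp => Vp.linearProjOfIsCompl Vm hc (J x)) ∧
    (∀ x ∈ Vp, R (P (J x)) = x) ∧
    (∀ x ∈ Vp, P (J (R x)) = x) := by
  change P = Vp.projection Vm hc at hP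
  subst hP hJ hR
  simp only [LinearMap.coe_comp, LinearEquiv.coe_coe, Function.comp_apply]
  have hR_mem (x : V) : Ψp.symm (Vp.projection Vm hc (Ψm x)) ∈ Vp :=
    hp' _ (projection_apply_mem hc _)
  have hRPJ (x : V) (hx : x ∈ Vp) :
      Ψp.symm (Vp.projection Vm hc (Ψm (Vp.projection Vm hc (Ψm.symm (Ψp x))))) = x := by
    rw [projection_apply_apply_projection_of_mapsTo hc hm, LinearEquiv.apply_symm_apply,
      projection_apply_of_mem_left hc (hp x hx), LinearEquiv.symm_apply_apply]
  have hPJR (x : V) (hx : x ∈ Vp) :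
      Vp.projection Vm hc (Ψm.symm (Ψp (Ψp.symm (Vp.projection Vm hc (Ψm x))))) = x := by
    rw [LinearEquiv.apply_symm_apply, projection_apply_apply_projection_of_mapsTo hc hm',
      LinearEquiv.symm_apply_apply, projection_apply_of_mem_left hc hx]
  refine ⟨fun x _ => hR_mem x, ?_, hRPJ, hPJR⟩
  exact Function.bijective_iff_has_inverse.mpr ⟨fun y => ⟨_, hR_mem y⟩,
    fun x => Subtype.ext (hRPJ x x.2), fun y => Subtype.ext (hPJR y y.2)⟩
end

section
/- Let R > 1, let Ψ : D_R → Mat_N(ℂ) be analytic on the disk D_R = {z : |z| < R} with Ψ(z) invertible for every z, and let g : D_R → ℂ^N be analytic. Let F : D_R × D_R → Mat_N(ℂ) be the analytic extension of the Cauchy–Plemelj kernel, i.e. F(z,z') = (1 − Ψ(z)Ψ(z')⁻¹)/(z − z') for z ≠ z' and F(z,z) = −Ψ'(z)Ψ(z)⁻¹. Then for every z₀ with |z₀| = 1, the contour integral over the unit circle ∮_{|w|=1} F(z₀, w)·g(w) dw equals 0. -/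
/-!
Writing `D(w)` for the entrywise difference quotient `(Ψ(w) - Ψ(z₀))/(w - z₀)`, extended by
`Ψ'(z₀)` at `w = z₀`, the kernel factors as `F(z₀, w) = -D(w) Ψ(w)⁻¹` on the whole disk.
By the removable singularity theorem `D` is holomorphic on `D_R`, so `w ↦ F(z₀, w) g(w)`
agrees on the unit circle with a function holomorphic on `D_R`, a neighbourhood of the closed
unit disk, and Cauchy's theorem makes its integral vanish.
-/

open Metric Matrix

section EntrywiseDifferentiable

variable {𝕜 : Type*} [NontriviallyNormedField 𝕜] {l m n : Type*} [Fintype m] {s : Set 𝕜}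

theorem DifferentiableOn.matrix_det [Fintype n] [DecidableEq n]
    {A : 𝕜 → Matrix n n 𝕜}
    (hA : ∀ i j, DifferentiableOn 𝕜 (fun z => A z i j) s) :
    DifferentiableOn 𝕜 (fun z => (A z).det) s := by
  simp_rw [det_apply']
  exact DifferentiableOn.fun_sum fun σ _ =>
    (differentiableOn_const _).mul (DifferentiableOn.fun_finsetProd fun i _ => hA (σ i) i)

theorem DifferentiableOn.matrix_adjugate_apply [Fintype n] [DecidableEq n]
    {A : 𝕜 → Matrix n n 𝕜}
    (hA : ∀ i j, DifferentiableOn 𝕜 (fun z => A z i j) s) (i j : n) :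
    DifferentiableOn 𝕜 (fun z => (A z).adjugate i j) s := by
  simp_rw [adjugate_apply]
  refine DifferentiableOn.matrix_det fun k l => ?_
  by_cases hk : k = j
  · simpa only [updateRow_apply, if_pos hk] using differentiableOn_const _
  · simpa only [updateRow_apply, if_neg hk] using hA k l

theorem DifferentiableOn.matrix_inv_apply [Fintype n] [DecidableEq n]
    {A : 𝕜 → Matrix n n 𝕜}
    (hA : ∀ i j, DifferentiableOn 𝕜 (fun z => A z i j) s)
    (hunit : ∀ z ∈ s, IsUnit (A z).det) (i j : n) :
    DifferentiableOn 𝕜 (fun z => (A z)⁻¹ i j) s := by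
  simp_rw [inv_def, Matrix.smul_apply, Ring.inverse_eq_inv, smul_eq_mul]
  exact ((DifferentiableOn.matrix_det hA).inv fun z hz => (hunit z hz).ne_zero).mul
    (DifferentiableOn.matrix_adjugate_apply hA i j)

theorem DifferentiableOn.matrix_mul_apply {A : 𝕜 → Matrix l m 𝕜} {B : 𝕜 → Matrix m n 𝕜}
    (hA : ∀ i j, DifferentiableOn 𝕜 (fun z => A z i j) s)
    (hB : ∀ i j, DifferentiableOn 𝕜 (fun z => B z i j) s) (i : l) (j : n) :
    DifferentiableOn 𝕜 (fun z => (A z * B z) i j) s := by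
  simp_rw [mul_apply]
  exact DifferentiableOn.fun_sum fun k _ => (hA i k).mul (hB k j)

theorem DifferentiableOn.matrix_mulVec {A : 𝕜 → Matrix l m 𝕜} {v : 𝕜 → m → 𝕜}
    (hA : ∀ i j, DifferentiableOn 𝕜 (fun z => A z i j) s) (hv : DifferentiableOn 𝕜 v s) :
    DifferentiableOn 𝕜 (fun z => A z *ᵥ v z) s := by
  refine differentiableOn_pi.mpr fun i => ?_
  simp_rw [mulVec, dotProduct]
  exact DifferentiableOn.fun_sum fun k _ => (hA i k).mul (differentiableOn_pi.mp hv k)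

end EntrywiseDifferentiable

section DslopeMatrix

variable {𝕜 : Type*} [NontriviallyNormedField 𝕜] {m n : Type*}

noncomputable def dslopeMatrix (Ψ : 𝕜 → Matrix m n 𝕜) (a b : 𝕜) : Matrix m n 𝕜 :=
  of fun i j => dslope (fun z => Ψ z i j) a b

theorem dslopeMatrix_same (Ψ : 𝕜 → Matrix m n 𝕜) (a : 𝕜) :
    dslopeMatrix Ψ a a = of fun i j => deriv (fun z => Ψ z i j) a := by
  simp only [dslopeMatrix, dslope_same]

theorem dslopeMatrix_of_ne (Ψ : 𝕜 → Matrix m n 𝕜) {a b : 𝕜} (h : b ≠ a) :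
    dslopeMatrix Ψ a b = (b - a)⁻¹ • (Ψ b - Ψ a) := by
  ext i j
  simp only [dslopeMatrix, of_apply, dslope_of_ne _ h, slope_def_field, Matrix.smul_apply,
    Matrix.sub_apply, smul_eq_mul, div_eq_inv_mul]

theorem DifferentiableOn.dslopeMatrix_apply {Ψ : ℂ → Matrix m n ℂ} {s : Set ℂ} {a : ℂ}
    (hs : s ∈ nhds a) (hΨ : ∀ i j, DifferentiableOn ℂ (fun z => Ψ z i j) s) (i : m) (j : n) :
    DifferentiableOn ℂ (fun z => dslopeMatrix Ψ a z i j) s :=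
  (Complex.differentiableOn_dslope hs).mpr (hΨ i j)

end DslopeMatrix

theorem Matrix.sub_inv_smul_one_sub_mul_inv {K n : Type*} [Field K] [Fintype n] [DecidableEq n]
    {A B : Matrix n n K} (hB : IsUnit B.det) (z z' : K) :
    (z - z')⁻¹ • (1 - A * B⁻¹) = -(((z' - z)⁻¹ • (B - A)) * B⁻¹) := by
  rw [smul_mul, sub_mul, mul_nonsing_inv B hB, ← neg_sub z z', inv_neg, neg_smul, neg_neg]

/-- The Cauchy–Plemelj operator with kernel `F(z,z') = (1 - Ψ(z)Ψ(z')⁻¹)/(z - z')`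
annihilates boundary values of functions analytic inside the unit circle:
for `g` analytic on the disk `D_R` (`R > 1`), `∮_{|w|=1} F(z₀, w)·g(w) dw = 0`
for every `z₀` on the unit circle. -/
theorem cauchyPlemelj_annihilates_interior_analytic (N : ℕ) (R : ℝ) (hR : 1 < R)
    (Ψ : ℂ → Matrix (Fin N) (Fin N) ℂ)
    (hΨ : ∀ i j, AnalyticOnNhd ℂ (fun z => Ψ z i j) (Metric.ball (0 : ℂ) R))
    (hinv : ∀ z ∈ Metric.ball (0 : ℂ) R, IsUnit (Ψ z))
    (g : ℂ → Fin N → ℂ)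
    (hg : ∀ i, AnalyticOnNhd ℂ (fun z => g z i) (Metric.ball (0 : ℂ) R))
    (F : ℂ → ℂ → Matrix (Fin N) (Fin N) ℂ)
    (hF1 : ∀ z ∈ Metric.ball (0 : ℂ) R, ∀ z' ∈ Metric.ball (0 : ℂ) R, z ≠ z' →
      F z z' = (z - z')⁻¹ • (1 - Ψ z * (Ψ z')⁻¹))
    (hF2 : ∀ z ∈ Metric.ball (0 : ℂ) R,
      F z z = -((Matrix.of fun i j => deriv (fun w => Ψ w i j) z) * (Ψ z)⁻¹)) :
    ∀ z₀ : ℂ, ‖z₀‖ = 1 →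
      (∮ w in C(0, 1), (F z₀ w).mulVec (g w)) = 0 := by
  intro z₀ hz₀
  have hz₀R : z₀ ∈ ball (0 : ℂ) R := by simpa [hz₀] using hR
  have hdet : ∀ z ∈ ball (0 : ℂ) R, IsUnit (Ψ z).det := fun z hz =>
    (isUnit_iff_isUnit_det _).mp (hinv z hz)
  have hkernel : ∀ w ∈ ball (0 : ℂ) R, F z₀ w = -(dslopeMatrix Ψ z₀ w * (Ψ w)⁻¹) := by
    intro w hw
    rcases eq_or_ne w z₀ with rfl | hne
    · rw [hF2 w hw, dslopeMatrix_same]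
    · rw [hF1 z₀ hz₀R w hw hne.symm, dslopeMatrix_of_ne Ψ hne,
        sub_inv_smul_one_sub_mul_inv (hdet w hw)]
  have hΨd : ∀ i j, DifferentiableOn ℂ (fun z => Ψ z i j) (ball 0 R) :=
    fun i j => (hΨ i j).differentiableOn
  have hholo : DifferentiableOn ℂ
      (fun w => -((dslopeMatrix Ψ z₀ w * (Ψ w)⁻¹) *ᵥ g w)) (ball 0 R) :=
    (DifferentiableOn.matrix_mulVec
      (DifferentiableOn.matrix_mul_apply
        (DifferentiableOn.dslopeMatrix_apply (isOpen_ball.mem_nhds hz₀R) hΨd)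
        (DifferentiableOn.matrix_inv_apply hΨd hdet))
      (differentiableOn_pi.mpr fun i => (hg i).differentiableOn)).neg
  calc (∮ w in C(0, 1), F z₀ w *ᵥ g w)
      = ∮ w in C(0, 1), -((dslopeMatrix Ψ z₀ w * (Ψ w)⁻¹) *ᵥ g w) :=
        circleIntegral.integral_congr zero_le_one fun w hw => by
          rw [hkernel w (sphere_subset_ball hR hw), neg_mulVec]
    _ = 0 := (hholo.diffContOnCl_ball (closedBall_subset_ball hR)).circleIntegral_eq_zero
        zero_le_one
end

section
/- Let Ψ₊, Ψ₋, Φ₊, Φ₋ be functions of two complex variables (t, z) on an open set W ⊆ ℂ², taking values in invertible N×N complex matrices, differentiable in t and in z, and satisfying Ψ₋(t,z)·Φ₊(t,z) = Ψ₊(t,z)·Φ₋(t,z) on W. Set J := Ψ₋⁻¹·Ψ₊. Then at every point of W: Tr[ J⁻¹·∂ₜJ·( ∂_zΦ₋·Φ₋⁻¹ + Ψ₊⁻¹·∂_zΨ₊ ) ] = Tr[ Ψ₊⁻¹·∂ₜΨ₊·( ∂_zΦ₋·Φ₋⁻¹ + Ψ₊⁻¹·∂_zΨ₊ ) ] − Tr[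 Ψ₋⁻¹·∂ₜΨ₋·( Ψ₋⁻¹·∂_zΨ₋ + ∂_zΦ₊·Φ₊⁻¹ ) ]. -/
/-!
With `J = Ψ₋⁻¹Ψ₊ = Φ₊Φ₋⁻¹` one has `J⁻¹∂ₜJ = Ψ₊⁻¹∂ₜΨ₊ - J⁻¹(Ψ₋⁻¹∂ₜΨ₋)J`. Writing
`G = Ψ₋Φ₊ = Ψ₊Φ₋`, the two `z`-logarithmic derivatives are `A = Ψ₊⁻¹ ∂_zG Φ₋⁻¹` and
`B = Ψ₋⁻¹ ∂_zG Φ₊⁻¹`, so `J A = B J`, and cyclicity of the trace turns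
`Tr[J⁻¹(Ψ₋⁻¹∂ₜΨ₋)J A]` into `Tr[Ψ₋⁻¹∂ₜΨ₋ B]`. Derivatives are taken entrywise; the inverse of
an entrywise differentiable matrix is differentiable by Cramer's rule.
-/

open Matrix Filter Topology

section EntrywiseDerivative

variable {𝕜 : Type*} [NontriviallyNormedField 𝕜] {l m n : Type*} {t : 𝕜}

noncomputable def matrixDeriv (f : 𝕜 → Matrix m n 𝕜) (t : 𝕜) : Matrix m n 𝕜 :=
  Matrix.of fun i j => deriv (fun s => f s i j) t

theorem Filter.EventuallyEq.matrixDeriv_eq {f g : 𝕜 → Matrix m n 𝕜} (h : f =ᶠ[𝓝 t] g) :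
    matrixDeriv f t = matrixDeriv g t := by
  ext i j
  exact Filter.EventuallyEq.deriv_eq (h.mono fun s hs => congrFun (congrFun hs i) j)

theorem matrixDeriv_const (A : Matrix m n 𝕜) : matrixDeriv (fun _ => A) t = 0 := by
  ext i j
  simp [matrixDeriv]

variable [Fintype m]

theorem differentiableAt_matrix_mul_apply {f : 𝕜 → Matrix l m 𝕜} {g : 𝕜 → Matrix m n 𝕜}
    (hf : ∀ i j, DifferentiableAt 𝕜 (fun s => f s i j) t)
    (hg : ∀ i j, DifferentiableAt 𝕜 (fun s => g s i j) t) (i : l) (k : n) :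
    DifferentiableAt 𝕜 (fun s => (f s * g s) i k) t := by
  simp only [mul_apply]
  fun_prop

theorem matrixDeriv_mul {f : 𝕜 → Matrix l m 𝕜} {g : 𝕜 → Matrix m n 𝕜}
    (hf : ∀ i j, DifferentiableAt 𝕜 (fun s => f s i j) t)
    (hg : ∀ i j, DifferentiableAt 𝕜 (fun s => g s i j) t) :
    matrixDeriv (fun s => f s * g s) t = matrixDeriv f t * g t + f t * matrixDeriv g t := by
  ext i k
  simp only [matrixDeriv, of_apply, mul_apply, Matrix.add_apply]
  rw [deriv_fun_sum (A := fun j s => f s i j * g s j k) fun j _ => (hf i j).mul (hg j k),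
    ← Finset.sum_add_distrib]
  exact Finset.sum_congr rfl fun j _ => deriv_fun_mul (hf i j) (hg j k)

variable [DecidableEq m]

theorem differentiableAt_matrix_det {f : 𝕜 → Matrix m m 𝕜}
    (hf : ∀ i j, DifferentiableAt 𝕜 (fun s => f s i j) t) :
    DifferentiableAt 𝕜 (fun s => (f s).det) t := by
  simp only [det_apply, Units.smul_def, zsmul_eq_mul]
  fun_prop

theorem differentiableAt_matrix_adjugate_apply {f : 𝕜 → Matrix m m 𝕜}
    (hf : ∀ i j, DifferentiableAt 𝕜 (fun s => f s i j) t) (i j : m) :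
    DifferentiableAt 𝕜 (fun s => (f s).adjugate i j) t := by
  simp only [adjugate_apply]
  refine differentiableAt_matrix_det fun k l => ?_
  by_cases h : k = j
  · simp [updateRow_apply, h]
  · simpa [updateRow_apply, h] using hf k l

theorem differentiableAt_matrix_inv_apply {f : 𝕜 → Matrix m m 𝕜}
    (hf : ∀ i j, DifferentiableAt 𝕜 (fun s => f s i j) t) (ht : IsUnit (f t)) (i j : m) :
    DifferentiableAt 𝕜 (fun s => (f s)⁻¹ i j) t := by
  simp only [inv_def, Matrix.smul_apply, Ring.inverse_eq_inv', smul_eq_mul]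
  exact ((differentiableAt_matrix_det hf).inv ((isUnit_iff_isUnit_det _).mp ht).ne_zero).mul
    (differentiableAt_matrix_adjugate_apply hf i j)

theorem matrixDeriv_inv {f : 𝕜 → Matrix m m 𝕜}
    (hf : ∀ i j, DifferentiableAt 𝕜 (fun s => f s i j) t) (ht : IsUnit (f t)) :
    matrixDeriv (fun s => (f s)⁻¹) t = -((f t)⁻¹ * matrixDeriv f t * (f t)⁻¹) := by
  have hdet := (isUnit_iff_isUnit_det _).mp ht
  have hinv_mul : (fun s => (f s)⁻¹ * f s) =ᶠ[𝓝 t] fun _ => 1 := by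
    filter_upwards [(differentiableAt_matrix_det hf).continuousAt.eventually_ne hdet.ne_zero]
      with s hs
    exact nonsing_inv_mul _ (isUnit_iff_ne_zero.mpr hs)
  have hprod : matrixDeriv (fun s => (f s)⁻¹) t * f t = -((f t)⁻¹ * matrixDeriv f t) := by
    rw [← add_eq_zero_iff_eq_neg, ← matrixDeriv_mul (differentiableAt_matrix_inv_apply hf ht) hf,
      hinv_mul.matrixDeriv_eq, matrixDeriv_const]
  calc matrixDeriv (fun s => (f s)⁻¹) t = matrixDeriv (fun s => (f s)⁻¹) t * f t * (f t)⁻¹ :=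
        (mul_nonsing_inv_cancel_right _ _ hdet).symm
    _ = -((f t)⁻¹ * matrixDeriv f t * (f t)⁻¹) := by rw [hprod, neg_mul]

end EntrywiseDerivative

section MatrixAlgebra

variable {n R : Type*} [Fintype n] [DecidableEq n] [CommRing R]

theorem logDeriv_inv_mul {M P TM TP : Matrix n n R} (hM : IsUnit M) :
    (M⁻¹ * P)⁻¹ * (-(M⁻¹ * TM * M⁻¹) * P + M⁻¹ * TP)
      = P⁻¹ * TP - (M⁻¹ * P)⁻¹ * (M⁻¹ * TM) * (M⁻¹ * P) := by
  have hMd := (isUnit_iff_isUnit_det M).mp hM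
  simp only [Matrix.mul_inv_rev, nonsing_inv_nonsing_inv M hMd, Matrix.mul_add, neg_mul,
    Matrix.mul_neg, Matrix.mul_assoc, mul_nonsing_inv_cancel_left M _ hMd]
  abel

theorem inv_mul_deriv_mul_mul_inv {P F ZP ZF : Matrix n n R} (hP : IsUnit P) (hF : IsUnit F) :
    P⁻¹ * (ZP * F + P * ZF) * F⁻¹ = P⁻¹ * ZP + ZF * F⁻¹ := by
  have hPd := (isUnit_iff_isUnit_det P).mp hP
  have hFd := (isUnit_iff_isUnit_det F).mp hF
  simp only [Matrix.mul_add, Matrix.add_mul, Matrix.mul_assoc, mul_nonsing_inv _ hFd,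
    nonsing_inv_mul_cancel_left _ _ hPd, mul_one]

theorem trace_sub_conj_mul {J X Y A B : Matrix n n R} (hJ : IsUnit J) (hAB : J * A = B * J) :
    trace ((X - J⁻¹ * Y * J) * A) = trace (X * A) - trace (Y * B) := by
  have hJd := (isUnit_iff_isUnit_det J).mp hJ
  have : trace (J⁻¹ * Y * J * A) = trace (Y * B) := by
    rw [Matrix.mul_assoc _ J, hAB, ← Matrix.mul_assoc, trace_mul_comm]
    simp only [Matrix.mul_assoc, mul_nonsing_inv_cancel_left _ _ hJd]
  rw [Matrix.sub_mul, trace_sub, this]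

theorem inv_mul_eq_mul_inv_of_mul_eq_mul {M P F G : Matrix n n R} (hM : IsUnit M) (hG : IsUnit G)
    (h : M * F = P * G) : M⁻¹ * P = F * G⁻¹ := by
  have hMd := (isUnit_iff_isUnit_det M).mp hM
  have hGd := (isUnit_iff_isUnit_det G).mp hG
  calc M⁻¹ * P = M⁻¹ * (P * G) * G⁻¹ := by
        rw [← Matrix.mul_assoc, mul_nonsing_inv_cancel_right _ _ hGd]
    _ = F * G⁻¹ := by rw [← h, nonsing_inv_mul_cancel_left _ _ hMd]

theorem inv_mul_intertwines_logDerivs {M P Fp Fm Zp Zm ZFp ZFm : Matrix n n R}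
    (hP : IsUnit P) (hM : IsUnit M) (hFp : IsUnit Fp) (hFm : IsUnit Fm)
    (hrel : M * Fp = P * Fm) (hZ : Zm * Fp + M * ZFp = Zp * Fm + P * ZFm) :
    M⁻¹ * P * (ZFm * Fm⁻¹ + P⁻¹ * Zp) = (M⁻¹ * Zm + ZFp * Fp⁻¹) * (M⁻¹ * P) := by
  have hPd := (isUnit_iff_isUnit_det P).mp hP
  have hFpd := (isUnit_iff_isUnit_det Fp).mp hFp
  set G := Zp * Fm + P * ZFm
  calc M⁻¹ * P * (ZFm * Fm⁻¹ + P⁻¹ * Zp) = M⁻¹ * (P * (P⁻¹ * G * Fm⁻¹)) := by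
        rw [inv_mul_deriv_mul_mul_inv hP hFm, add_comm, Matrix.mul_assoc]
    _ = M⁻¹ * G * Fp⁻¹ * (Fp * Fm⁻¹) := by
        simp only [Matrix.mul_assoc, mul_nonsing_inv_cancel_left _ _ hPd,
          nonsing_inv_mul_cancel_left _ _ hFpd]
    _ = (M⁻¹ * Zm + ZFp * Fp⁻¹) * (M⁻¹ * P) := by
        rw [← hZ, inv_mul_deriv_mul_mul_inv hM hFp,
          inv_mul_eq_mul_inv_of_mul_eq_mul hM hFm hrel]

theorem trace_inv_mul_deriv_of_mul_eq_mul {M P Fp Fm TJ TP TM ZP ZM ZFp ZFm : Matrix n n R}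
    (hP : IsUnit P) (hM : IsUnit M) (hFp : IsUnit Fp) (hFm : IsUnit Fm)
    (hrel : M * Fp = P * Fm) (hTJ : TJ = -(M⁻¹ * TM * M⁻¹) * P + M⁻¹ * TP)
    (hZ : ZM * Fp + M * ZFp = ZP * Fm + P * ZFm) :
    trace ((M⁻¹ * P)⁻¹ * TJ * (ZFm * Fm⁻¹ + P⁻¹ * ZP))
      = trace (P⁻¹ * TP * (ZFm * Fm⁻¹ + P⁻¹ * ZP))
        - trace (M⁻¹ * TM * (M⁻¹ * ZM + ZFp * Fp⁻¹)) := by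
  rw [hTJ, logDeriv_inv_mul hM]
  exact trace_sub_conj_mul (isUnit_nonsing_inv_iff.mpr hM |>.mul hP)
    (inv_mul_intertwines_logDerivs hP hM hFp hFm hrel hZ)

end MatrixAlgebra

/-- Pointwise matrix-calculus identity underlying the differentiation formula for the
tau function: if `Ψ₋ Φ₊ = Ψ₊ Φ₋` on an open set `W ⊆ ℂ²`, all four matrix functions
being invertible and differentiable in each variable, then with `J = Ψ₋⁻¹ Ψ₊`,
`Tr[J⁻¹ ∂ₜJ (∂_zΦ₋ Φ₋⁻¹ + Ψ₊⁻¹ ∂_zΨ₊)] = Tr[Ψ₊⁻¹ ∂ₜΨ₊ (∂_zΦ₋ Φ₋⁻¹ + Ψ₊⁻¹ ∂_zΨ₊)]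
  - Tr[Ψ₋⁻¹ ∂ₜΨ₋ (Ψ₋⁻¹ ∂_zΨ₋ + ∂_zΦ₊ Φ₊⁻¹)]`. -/
theorem trace_identity_for_tau_derivative (N : ℕ) (W : Set (ℂ × ℂ)) (hW : IsOpen W)
    (Ψp Ψm Φp Φm : ℂ → ℂ → Matrix (Fin N) (Fin N) ℂ)
    (hinv : ∀ p ∈ W, IsUnit (Ψp p.1 p.2) ∧ IsUnit (Ψm p.1 p.2) ∧
      IsUnit (Φp p.1 p.2) ∧ IsUnit (Φm p.1 p.2))
    (hdiff_t : ∀ p ∈ W, ∀ i j,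
      DifferentiableAt ℂ (fun s => Ψp s p.2 i j) p.1 ∧
      DifferentiableAt ℂ (fun s => Ψm s p.2 i j) p.1 ∧
      DifferentiableAt ℂ (fun s => Φp s p.2 i j) p.1 ∧
      DifferentiableAt ℂ (fun s => Φm s p.2 i j) p.1)
    (hdiff_z : ∀ p ∈ W, ∀ i j,
      DifferentiableAt ℂ (fun w => Ψp p.1 w i j) p.2 ∧
      DifferentiableAt ℂ (fun w => Ψm p.1 w i j) p.2 ∧
      DifferentiableAt ℂ (fun w => Φp p.1 w i j) p.2 ∧
      DifferentiableAt ℂ (fun w => Φm p.1 w i j) p.2)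
    (hrel : ∀ p ∈ W, Ψm p.1 p.2 * Φp p.1 p.2 = Ψp p.1 p.2 * Φm p.1 p.2) :
    ∀ t z : ℂ, (t, z) ∈ W →
      Matrix.trace
        (((Ψm t z)⁻¹ * Ψp t z)⁻¹
          * (Matrix.of fun i j => deriv (fun s => ((Ψm s z)⁻¹ * Ψp s z) i j) t)
          * ((Matrix.of fun i j => deriv (fun w => Φm t w i j) z) * (Φm t z)⁻¹
              + (Ψp t z)⁻¹ * (Matrix.of fun i j => deriv (fun w => Ψp t w i j) z)))
      = Matrix.trace
          ((Ψp t z)⁻¹ * (Matrix.of fun i j => deriv (fun s => Ψp s z i j) t)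
            * ((Matrix.of fun i j => deriv (fun w => Φm t w i j) z) * (Φm t z)⁻¹
                + (Ψp t z)⁻¹ * (Matrix.of fun i j => deriv (fun w => Ψp t w i j) z)))
        - Matrix.trace
            ((Ψm t z)⁻¹ * (Matrix.of fun i j => deriv (fun s => Ψm s z i j) t)
              * ((Ψm t z)⁻¹ * (Matrix.of fun i j => deriv (fun w => Ψm t w i j) z)
                  + (Matrix.of fun i j => deriv (fun w => Φp t w i j) z) * (Φp t z)⁻¹)) := by
  intro t z hmem
  obtain ⟨hPu, hMu, hFpu, hFmu⟩ := hinv (t, z) hmem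
  have hdt := hdiff_t (t, z) hmem
  have hdz := hdiff_z (t, z) hmem
  have hMt := fun i j => (hdt i j).2.1
  have hJ : matrixDeriv (fun s => (Ψm s z)⁻¹ * Ψp s z) t
      = -((Ψm t z)⁻¹ * matrixDeriv (fun s => Ψm s z) t * (Ψm t z)⁻¹) * Ψp t z
        + (Ψm t z)⁻¹ * matrixDeriv (fun s => Ψp s z) t := by
    rw [matrixDeriv_mul (differentiableAt_matrix_inv_apply hMt hMu) fun i j => (hdt i j).1,
      matrixDeriv_inv hMt hMu]
  have hrel_near : (fun w => Ψm t w * Φp t w) =ᶠ[𝓝 z] fun w => Ψp t w * Φm t w :=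
    ((continuous_const.prodMk continuous_id).tendsto z).eventually (hW.mem_nhds hmem)
      |>.mono fun w hw => hrel (t, w) hw
  have hZ := hrel_near.matrixDeriv_eq
  rw [matrixDeriv_mul (fun i j => (hdz i j).2.1) (fun i j => (hdz i j).2.2.1),
    matrixDeriv_mul (fun i j => (hdz i j).1) (fun i j => (hdz i j).2.2.2)] at hZ
  exact trace_inv_mul_deriv_of_mul_eq_mul hPu hMu hFpu hFmu (hrel (t, z) hmem) hJ hZ
end

section
/- Let U ⊆ ℂ∖{0} be open, let A, Λ : U → Mat_N(ℂ) be analytic, and let Ψ : U → Mat_N(ℂ) be analytic with invertible values satisfying the linear ODE Ψ'(z) = Ψ(z)·A(z) + z⁻¹·Λ(z)·Ψ(z) on U. Define 𝖺(z, z') := (1 − Ψ(z)·Ψ(z')⁻¹)/(z − z') for z ≠ z' in U. Then for all z ≠ z' in U: z·∂_z𝖺(z,z') + z'·∂_{z'}𝖺(z,z') + 𝖺(z,z') = Ψ(z)·[(z'·A(z') − z·A(z))/(z − z')]·Ψ(z')⁻¹ + Λ(z)·𝖺(z,z') − 𝖺(z,z')·Λ(z') + (Λ(z') − Λ(z))/(z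 − z'). -/
/-!
The Euler operator `z ∂_z + z' ∂_{z'} + 1` annihilates `1/(z - z')`, which is homogeneous of
degree `-1`; hence on `g(z, z')/(z - z')` it acts as `(z ∂_z g + z' ∂_{z'} g)/(z - z')`. For
`g = 1 - Ψ(z) Ψ(z')⁻¹`, the ODE in the form `z Ψ' = Ψ (z A) + Λ Ψ` and
`(Ψ⁻¹)' = -Ψ⁻¹ Ψ' Ψ⁻¹` turn this numerator into
`Ψ(z) (z' A(z') - z A(z)) Ψ(z')⁻¹ + Ψ(z) Ψ(z')⁻¹ Λ(z') - Λ(z) Ψ(z) Ψ(z')⁻¹`,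
and the last two terms regroup as `Λ(z) 𝖺 - 𝖺 Λ(z') + (Λ(z') - Λ(z))/(z - z')`.
-/

open Topology

-- A normed-algebra structure on matrices, needed to differentiate `Ψ⁻¹`; its topology is the
-- product topology, so derivatives can still be computed entrywise.
attribute [local instance] Matrix.linftyOpNormedAddCommGroup Matrix.linftyOpNormedSpace
  Matrix.linftyOpNormedRing Matrix.linftyOpNormedAlgebra

theorem HasDerivAt.ringInverse {𝕜 R : Type*} [NontriviallyNormedField 𝕜] [NormedRing R]
    [HasSummableGeomSeries R] [NormedAlgebra 𝕜 R] {h : 𝕜 → R} {h' : R} {z : 𝕜}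
    (hh : HasDerivAt h h' z) (hz : IsUnit (h z)) :
    HasDerivAt (fun w => Ring.inverse (h w))
      (-(Ring.inverse (h z) * h' * Ring.inverse (h z))) z := by
  obtain ⟨u, hu⟩ := hz
  have := (hasFDerivAt_ringInverse (𝕜 := 𝕜) u).comp_hasDerivAt_of_eq z hh hu
  simpa [← hu, Function.comp_def, Ring.inverse_unit] using this

namespace Matrix

section Entries

variable {𝕜 m n : Type*} [NontriviallyNormedField 𝕜] [CompleteSpace 𝕜] [Fintype m] [Fintype n]
  {F : 𝕜 → Matrix m n 𝕜} {D : Matrix m n 𝕜} {z : 𝕜}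

theorem hasDerivAt_iff_entries :
    HasDerivAt F D z ↔ ∀ i j, HasDerivAt (fun w => F w i j) (D i j) z := by
  let e : Matrix m n 𝕜 ≃L[𝕜] (m → n → 𝕜) := (ofLinearEquiv 𝕜).symm.toContinuousLinearEquiv
  have key : HasDerivAt F D z ↔ HasDerivAt (fun w => e (F w)) (e D) z := by
    refine ⟨fun h => e.hasFDerivAt.comp_hasDerivAt z h, fun h => ?_⟩
    have := e.symm.hasFDerivAt.comp_hasDerivAt z h
    simp only [Function.comp_def] at this
    exact this
  simp only [key, hasDerivAt_pi]
  rfl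

theorem _root_.HasDerivAt.matrix_of_deriv_apply (h : HasDerivAt F D z) :
    (of fun i j => deriv (fun w => F w i j) z) = D := by
  ext i j
  exact (hasDerivAt_iff_entries.mp h i j).deriv

theorem hasDerivAt_of_differentiableAt_entries
    (h : ∀ i j, DifferentiableAt 𝕜 (fun w => F w i j) z) :
    HasDerivAt F (of fun i j => deriv (fun w => F w i j) z) z :=
  hasDerivAt_iff_entries.mpr fun i j => (h i j).hasDerivAt

end Entries

theorem _root_.HasDerivAt.matrix_inv {𝕜 n : Type*} [RCLike 𝕜] [Fintype n] [DecidableEq n]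
    {F : 𝕜 → Matrix n n 𝕜} {F' : Matrix n n 𝕜} {z : 𝕜} (hF : HasDerivAt F F' z)
    (hz : IsUnit (F z)) :
    HasDerivAt (fun w => (F w)⁻¹) (-((F z)⁻¹ * F' * (F z)⁻¹)) z := by
  have := hF.ringInverse hz
  simp only [← nonsing_inv_eq_ringInverse] at this
  exact this

end Matrix

section CauchyKernel

variable {𝕜 E : Type*} [NontriviallyNormedField 𝕜] [NormedAddCommGroup E] [NormedSpace 𝕜 E]
  {f : 𝕜 → E} {f' : E} {z c : 𝕜}

theorem HasDerivAt.sub_const_inv_smul (hf : HasDerivAt f f' z) (hz : z ≠ c) :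
    HasDerivAt (fun w => (w - c)⁻¹ • f w) ((z - c)⁻¹ • (f' - (z - c)⁻¹ • f z)) z := by
  convert (((hasDerivAt_id' z).sub_const c).fun_inv (sub_ne_zero.mpr hz)).fun_smul hf using 1
  match_scalars <;> field_simp

theorem HasDerivAt.const_sub_inv_smul (hf : HasDerivAt f f' z) (hz : c ≠ z) :
    HasDerivAt (fun w => (c - w)⁻¹ • f w) ((c - z)⁻¹ • (f' + (c - z)⁻¹ • f z)) z := by
  convert (((hasDerivAt_id' z).const_sub c).fun_inv (sub_ne_zero.mpr hz)).fun_smul hf using 1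
  match_scalars <;> field_simp

theorem euler_inv_sub_smul {z z' : 𝕜} (h : z ≠ z') (u v k : E) :
    z • ((z - z')⁻¹ • (u - k)) + z' • ((z - z')⁻¹ • (v + k)) + k
      = (z - z')⁻¹ • (z • u + z' • v) := by
  have hd : z - z' ≠ 0 := sub_ne_zero.mpr h
  match_scalars <;> field_simp
  ring

end CauchyKernel

theorem euler_numerator_eq {𝕜 R : Type*} [Field 𝕜] [Ring R] [Algebra 𝕜 R]
    {P Q C P' Q' Az Az' Lz Lz' : R} {z z' : 𝕜} (hCQ : C * Q = 1) (hQC : Q * C = 1)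
    (hP' : z • P' = P * (z • Az) + Lz * P) (hQ' : z' • Q' = Q * (z' • Az') + Lz' * Q) (d : 𝕜) :
    d • (z • -(P' * C) + z' • -(P * -(C * Q' * C)))
      = P * (d • (z' • Az' - z • Az)) * C + Lz * (d • (1 - P * C))
          - (d • (1 - P * C)) * Lz' + d • (Lz' - Lz) := by
  have hleft : z • -(P' * C) = -(P * (z • Az) * C) - Lz * P * C := by
    rw [smul_neg, ← smul_mul_assoc, hP', add_mul, neg_add, sub_eq_add_neg]
  have hright : z' • -(P * -(C * Q' * C)) = P * (z' • Az') * C + P * C * Lz' := by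
    rw [neg_mul_eq_mul_neg, neg_neg, mul_assoc C, ← mul_smul_comm, ← mul_smul_comm,
      ← smul_mul_assoc, hQ', add_mul, mul_add, mul_add]
    simp only [← mul_assoc, hCQ, one_mul]
    simp only [mul_assoc, hQC, mul_one]
  rw [hleft, hright]
  simp only [mul_sub, sub_mul, mul_smul_comm, smul_mul_assoc, mul_one, one_mul, mul_assoc]
  module

theorem euler_operator_on_cauchyPlemelj_kernel_general (N : ℕ) (U : Set ℂ)
    (hU0 : (0 : ℂ) ∉ U)
    (A Λm Ψ : ℂ → Matrix (Fin N) (Fin N) ℂ)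
    (hΨ : ∀ i j, AnalyticOnNhd ℂ (fun z => Ψ z i j) U)
    (hinv : ∀ z ∈ U, IsUnit (Ψ z))
    (hODE : ∀ z ∈ U,
      (Matrix.of fun i j => deriv (fun w => Ψ w i j) z) = Ψ z * A z + z⁻¹ • (Λm z * Ψ z))
    (a : ℂ → ℂ → Matrix (Fin N) (Fin N) ℂ)
    (ha : ∀ z z' : ℂ, z ≠ z' → a z z' = (z - z')⁻¹ • (1 - Ψ z * (Ψ z')⁻¹)) :
    ∀ z ∈ U, ∀ z' ∈ U, z ≠ z' →
      z • (Matrix.of fun i j => deriv (fun w => a w z' i j) z)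
        + z' • (Matrix.of fun i j => deriv (fun w => a z w i j) z')
        + a z z'
      = Ψ z * ((z - z')⁻¹ • (z' • A z' - z • A z)) * (Ψ z')⁻¹
          + Λm z * a z z' - a z z' * Λm z'
          + (z - z')⁻¹ • (Λm z' - Λm z) := by
  intro z hz z' hz' hne
  have hΨ' : ∀ w ∈ U, HasDerivAt Ψ (Ψ w * A w + w⁻¹ • (Λm w * Ψ w)) w := fun w hw =>
    hODE w hw ▸ Matrix.hasDerivAt_of_differentiableAt_entries
      fun i j => (hΨ i j w hw).differentiableAt
  have hzΨ' : ∀ w ∈ U, w • (Ψ w * A w + w⁻¹ • (Λm w * Ψ w)) = Ψ w * (w • A w) + Λm w * Ψ w :=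
    fun w hw => by
      rw [smul_add, smul_smul, mul_inv_cancel₀ (ne_of_mem_of_not_mem hw hU0), one_smul,
        mul_smul_comm]
  have near_left : (fun w => a w z') =ᶠ[𝓝 z] fun w => (w - z')⁻¹ • (1 - Ψ w * (Ψ z')⁻¹) := by
    filter_upwards [eventually_ne_nhds hne] with w hw using ha w z' hw
  have near_right : (fun w => a z w) =ᶠ[𝓝 z'] fun w => (z - w)⁻¹ • (1 - Ψ z * (Ψ w)⁻¹) := by
    filter_upwards [eventually_ne_nhds hne.symm] with w hw using ha z w (Ne.symm hw)
  have hleft := (((hΨ' z hz).mul_const (Ψ z')⁻¹).const_sub 1).sub_const_inv_smul hne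
  have hright := ((((hΨ' z' hz').matrix_inv (hinv z' hz')).const_mul (Ψ z)).const_sub 1)
    |>.const_sub_inv_smul hne
  rw [(hleft.congr_of_eventuallyEq near_left).matrix_of_deriv_apply,
    (hright.congr_of_eventuallyEq near_right).matrix_of_deriv_apply, ← ha z z' hne,
    euler_inv_sub_smul hne, ha z z' hne]
  have hdet := (Matrix.isUnit_iff_isUnit_det _).mp (hinv z' hz')
  exact euler_numerator_eq (Matrix.nonsing_inv_mul _ hdet) (Matrix.mul_nonsing_inv _ hdet)
    (hzΨ' z hz) (hzΨ' z' hz') _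

/-- Action of the Euler operator `ℒ₀ = z∂_z + z'∂_{z'} + 1` on the Cauchy–Plemelj kernel
`a(z,z') = (1 - Ψ(z)Ψ(z')⁻¹)/(z - z')` when `Ψ` satisfies the linear ODE
`∂_zΨ = Ψ A + z⁻¹ Λ Ψ`. -/
theorem euler_operator_on_cauchyPlemelj_kernel (N : ℕ) (U : Set ℂ)
    (hU : IsOpen U) (hU0 : (0 : ℂ) ∉ U)
    (A Λm Ψ : ℂ → Matrix (Fin N) (Fin N) ℂ)
    (hA : ∀ i j, AnalyticOnNhd ℂ (fun z => A z i j) U)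
    (hΛ : ∀ i j, AnalyticOnNhd ℂ (fun z => Λm z i j) U)
    (hΨ : ∀ i j, AnalyticOnNhd ℂ (fun z => Ψ z i j) U)
    (hinv : ∀ z ∈ U, IsUnit (Ψ z))
    (hODE : ∀ z ∈ U,
      (Matrix.of fun i j => deriv (fun w => Ψ w i j) z) = Ψ z * A z + z⁻¹ • (Λm z * Ψ z))
    (a : ℂ → ℂ → Matrix (Fin N) (Fin N) ℂ)
    (ha : ∀ z z' : ℂ, z ≠ z' → a z z' = (z - z')⁻¹ • (1 - Ψ z * (Ψ z')⁻¹)) :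
    ∀ z ∈ U, ∀ z' ∈ U, z ≠ z' →
      z • (Matrix.of fun i j => deriv (fun w => a w z' i j) z)
        + z' • (Matrix.of fun i j => deriv (fun w => a z w i j) z')
        + a z z'
      = Ψ z * ((z - z')⁻¹ • (z' • A z' - z • A z)) * (Ψ z')⁻¹
          + Λm z * a z z' - a z z' * Λm z'
          + (z - z')⁻¹ • (Λm z' - Λm z) :=
  euler_operator_on_cauchyPlemelj_kernel_general N U hU0 A Λm Ψ hΨ hinv hODE a ha
end

section
/- Let V be a finite-dimensional complex vector space with direct sum decomposition V = V₊ ⊕ V₋, Π the projection onto V₊ along V₋, Π₋ := 1 − Π. Let Ψ₊, Ψ̄₊ be invertible endomorphisms preserving V₊ (both the map and its inverse map V₊ into V₊), Ψ₋, Ψ̄₋ invertible endomorphisms preserving V₋, with Ψ₋⁻¹∘Ψ₊ = Ψ̄₊∘Ψ̄₋⁻¹. Set a := Ψ₊ΠΨ₊⁻¹ − Π, d := Ψ₋Π₋Ψ₋⁻¹ − Π₋, L := a + d, and M := Ψ₊∘Ψ̄₋ (= Ψ₋∘Ψ̄₊). Then 1 + L is invertible and the operator K := L∘(1 + L)⁻¹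 satisfies: Π∘K∘Π = Π M Π₋ M⁻¹ Π, Π∘K∘Π₋ = −Π M Π₋ M⁻¹ Π₋, Π₋∘K∘Π = −Π₋ M Π M⁻¹ Π, and Π₋∘K∘Π₋ = Π₋ M Π M⁻¹ Π₋. -/
/-!
With `Q = 1 - Π`, one has `1 + L = A + B` for `A = Ψ₊ Π Ψ₊⁻¹` and `B = Ψ₋ Q Ψ₋⁻¹`, the projections
onto `V₊` along `Ψ₊ V₋` and onto `V₋` along `Ψ₋ V₊`. The factorization `M = Ψ₊ Ψ̄₋ = Ψ₋ Ψ̄₊` shows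
that the projections `E = M Π M⁻¹` and `1 - E` have the same kernels as `A` and `B`, and two such
pairs of projections give `(A + B)⁻¹ = E Π + (1 - E) Q`. Then `K = 1 - (1 + L)⁻¹`, whose blocks
are read off using `Π² = Π`.
-/

namespace Units

-- `e * u * e = u * e` encodes that `u` maps the range of the idempotent `e` into itself.

section Monoid

variable {M : Type*} [Monoid M] (u : Mˣ) {e : M}

theorem conj_mul_conj (x y : M) : u * x * ↑u⁻¹ * (u * y * ↑u⁻¹) = u * (x * y) * ↑u⁻¹ := by
  simp [mul_assoc]

theorem conj_mul_of_mul_inv_mul (h : e * ↑u⁻¹ * e = ↑u⁻¹ * e) : u * e * ↑u⁻¹ * e = e := by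
  simp only [mul_assoc] at h ⊢
  rw [h, mul_inv_cancel_left]

theorem mul_conj_of_mul_mul (h : e * u * e = u * e) : e * (u * e * ↑u⁻¹) = u * e * ↑u⁻¹ := by
  rw [← mul_assoc, ← mul_assoc, h]

end Monoid

section Ring

variable {R : Type*} [Ring R] (u : Rˣ) {e f : R}

theorem mul_conj_of_add_eq_one (hef : e + f = 1) (h : f * u * f = u * f) :
    e * (u * e * ↑u⁻¹) = e := by
  obtain rfl : e = 1 - f := eq_sub_of_add_eq hef
  calc (1 - f) * (u * (1 - f) * ↑u⁻¹) = 1 - f - (u * f - f * u * f) * ↑u⁻¹ := by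
        simp only [mul_sub, sub_mul, mul_one, one_mul, mul_assoc, u.mul_inv]
    _ = 1 - f := by rw [h, sub_self, zero_mul, sub_zero]

theorem conj_mul_of_add_eq_one (hef : e + f = 1) (h : f * ↑u⁻¹ * f = ↑u⁻¹ * f) :
    u * e * ↑u⁻¹ * e = u * e * ↑u⁻¹ := by
  obtain rfl : e = 1 - f := eq_sub_of_add_eq hef
  calc u * (1 - f) * ↑u⁻¹ * (1 - f) = u * (1 - f) * ↑u⁻¹ - u * (↑u⁻¹ * f - f * ↑u⁻¹ * f) := by
        simp only [mul_sub, sub_mul, mul_one, mul_assoc, u.mul_inv_cancel_left]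
    _ = u * (1 - f) * ↑u⁻¹ := by rw [h, sub_self, mul_zero, sub_zero]

end Ring

end Units

section Ring

variable {R : Type*} [Ring R] {P Q A B E F : R}

/-- For operators: `A` projects onto `range P` along `ker E`, `B` onto `range Q` along `ker F`. -/
theorem isUnit_add_and_inverse_eq (hPQ : P + Q = 1) (hEF : E + F = 1)
    (hAP : A * P = P) (hPA : P * A = A) (hAE : A * E = A) (hEA : E * A = E)
    (hBQ : B * Q = Q) (hQB : Q * B = B) (hBF : B * F = B) (hFB : F * B = F) :
    IsUnit (A + B) ∧ Ring.inverse (A + B) = E * P + F * Q := by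
  obtain rfl : Q = 1 - P := eq_sub_of_add_eq' hPQ
  obtain rfl : F = 1 - E := eq_sub_of_add_eq' hEF
  have hright : (A + B) * (E * P + (1 - E) * (1 - P)) = 1 := calc
    _ = A * E * P + (A - A * E) * (1 - P) + (B - B * (1 - E)) * P + B * (1 - E) * (1 - P) := by
      noncomm_ring
    _ = 1 := by rw [hAE, hBF, sub_self, sub_self, hAP, hBQ]; noncomm_ring
  have hleft : (E * P + (1 - E) * (1 - P)) * (A + B) = 1 := calc
    _ = E * (P * A) + E * (B - (1 - P) * B) + (1 - E) * (A - P * A) + (1 - E) * ((1 - P) * B) := by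
      noncomm_ring
    _ = 1 := by rw [hPA, hQB, sub_self, sub_self, hEA, hFB]; noncomm_ring
  let u : Rˣ := ⟨A + B, _, hright, hleft⟩
  exact ⟨u.isUnit, Ring.inverse_unit u⟩

theorem blocks_one_sub_mul_add_mul (hP : IsIdempotentElem P) (hPQ : P + Q = 1)
    (hEF : E + F = 1) :
    P * (1 - (E * P + F * Q)) * P = P * F * P ∧
    P * (1 - (E * P + F * Q)) * Q = -(P * F * Q) ∧
    Q * (1 - (E * P + F * Q)) * P = -(Q * E * P) ∧
    Q * (1 - (E * P + F * Q)) * Q = Q * E * Q := by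
  obtain rfl : Q = 1 - P := eq_sub_of_add_eq' hPQ
  obtain rfl : F = 1 - E := eq_sub_of_add_eq' hEF
  refine ⟨?_, ?_, ?_, ?_⟩ <;>
    simp only [mul_sub, sub_mul, mul_add, add_mul, mul_one, one_mul, mul_assoc, hP.eq] <;>
    noncomm_ring

theorem mul_inverse_one_add {x : R} (h : IsUnit (1 + x)) :
    x * Ring.inverse (1 + x) = 1 - Ring.inverse (1 + x) := by
  rw [eq_sub_iff_add_eq, ← add_one_mul, add_comm, Ring.mul_inverse_cancel _ h]

variable {p m bp bm : Rˣ}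

theorem isUnit_conj_add_conj_and_inverse_eq (hfact : m⁻¹ * p = bp * bm⁻¹)
    (hp : P * p * P = p * P) (hp' : P * ↑p⁻¹ * P = ↑p⁻¹ * P)
    (hbp : P * bp * P = bp * P) (hbp' : P * ↑bp⁻¹ * P = ↑bp⁻¹ * P)
    (hm : (1 - P) * m * (1 - P) = m * (1 - P))
    (hm' : (1 - P) * ↑m⁻¹ * (1 - P) = ↑m⁻¹ * (1 - P))
    (hbm : (1 - P) * bm * (1 - P) = bm * (1 - P))
    (hbm' : (1 - P) * ↑bm⁻¹ * (1 - P) = ↑bm⁻¹ * (1 - P)) :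
    IsUnit (p * P * ↑p⁻¹ + m * (1 - P) * ↑m⁻¹) ∧
    Ring.inverse (p * P * ↑p⁻¹ + m * (1 - P) * ↑m⁻¹) =
      ↑(p * bm) * P * ↑(p * bm)⁻¹ * P + ↑(p * bm) * (1 - P) * ↑(p * bm)⁻¹ * (1 - P) := by
  have hM : p * bm = m * bp := calc
    p * bm = m * (m⁻¹ * p) * bm := by group
    _ = m * bp := by rw [hfact]; group
  have hPQ : P + (1 - P) = 1 := add_sub_cancel P 1
  have hQP : (1 - P) + P = 1 := sub_add_cancel 1 P
  have hconj (u v : Rˣ) (x : R) : ↑(u * v) * x * ↑(u * v)⁻¹ = u * (v * x * ↑v⁻¹) * ↑u⁻¹ := by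
    simp [mul_assoc]
  refine isUnit_add_and_inverse_eq hPQ ?_ (p.conj_mul_of_mul_inv_mul hp') (p.mul_conj_of_mul_mul hp)
    ?_ ?_ (m.conj_mul_of_mul_inv_mul hm') (m.mul_conj_of_mul_mul hm) ?_ ?_
  · rw [← add_mul, ← mul_add, hPQ, mul_one, Units.mul_inv]
  · rw [hconj, Units.conj_mul_conj, bm.mul_conj_of_add_eq_one hPQ hbm]
  · rw [hconj, Units.conj_mul_conj, bm.conj_mul_of_add_eq_one hPQ hbm']
  · rw [hM, hconj, Units.conj_mul_conj, bp.mul_conj_of_add_eq_one hQP hbp]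
  · rw [hM, hconj, Units.conj_mul_conj, bp.conj_mul_of_add_eq_one hQP hbp']

end Ring

theorem Submodule.projection_mul_mul_projection_of_forall_mem {K V : Type*} [Ring K]
    [AddCommGroup V] [Module K V] {p q : Submodule K V} (hc : IsCompl p q)
    {T : Module.End K V} (hT : ∀ x ∈ p, T x ∈ p) :
    p.projection q hc * T * p.projection q hc = T * p.projection q hc := by
  have h := LinearMap.IsIdempotentElem.range_mem_invtSubmodule_iff (T := T)
    (Submodule.isIdempotentElem_projection hc)
  rw [Submodule.range_projection, Module.End.mem_invtSubmodule_iff_forall_mem_of_mem] at h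
  exact (mul_assoc _ _ _).trans (h.mp hT)

theorem correlation_kernel_blocks_general
    (V : Type) [AddCommGroup V] [Module ℂ V]
    (Vp Vm : Submodule ℂ V) (hc : IsCompl Vp Vm)
    (Ψp Ψm Ψbp Ψbm : V ≃ₗ[ℂ] V)
    (hp : ∀ x ∈ Vp, Ψp x ∈ Vp) (hp' : ∀ x ∈ Vp, Ψp.symm x ∈ Vp)
    (hbp : ∀ x ∈ Vp, Ψbp x ∈ Vp) (hbp' : ∀ x ∈ Vp, Ψbp.symm x ∈ Vp)
    (hm : ∀ x ∈ Vm, Ψm x ∈ Vm) (hm' : ∀ x ∈ Vm, Ψm.symm x ∈ Vm)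
    (hbm : ∀ x ∈ Vm, Ψbm x ∈ Vm) (hbm' : ∀ x ∈ Vm, Ψbm.symm x ∈ Vm)
    (hfact : Ψm.symm.toLinearMap ∘ₗ Ψp.toLinearMap
      = Ψbp.toLinearMap ∘ₗ Ψbm.symm.toLinearMap)
    (P a d L M Minv : Module.End ℂ V)
    (hP : P = Vp.subtype ∘ₗ Vp.linearProjOfIsCompl Vm hc)
    (ha : a = Ψp.toLinearMap ∘ₗ P ∘ₗ Ψp.symm.toLinearMap - P)
    (hd : d = Ψm.toLinearMap ∘ₗ (1 - P : Module.End ℂ V) ∘ₗ Ψm.symm.toLinearMap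
      - (1 - P : Module.End ℂ V))
    (hL : L = a + d)
    (hM : M = Ψp.toLinearMap ∘ₗ Ψbm.toLinearMap)
    (hMinv : Minv = Ψbm.symm.toLinearMap ∘ₗ Ψp.symm.toLinearMap) :
    IsUnit (1 + L) ∧
    P * (L * Ring.inverse (1 + L)) * P = P * M * (1 - P) * Minv * P ∧
    P * (L * Ring.inverse (1 + L)) * (1 - P) = -(P * M * (1 - P) * Minv * (1 - P)) ∧
    (1 - P) * (L * Ring.inverse (1 + L)) * P = -((1 - P) * M * P * Minv * P) ∧
    (1 - P) * (L * Ring.inverse (1 + L)) * (1 - P) = (1 - P) * M * P * Minv * (1 - P) := by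
  let u := LinearMap.GeneralLinearGroup.ofLinearEquiv (R := ℂ) (M := V)
  have hQ : 1 - P = Vm.projection Vp hc.symm := by
    rw [hP, Submodule.projection_eq_id_sub_projection]; rfl
  have h1L : 1 + L = Ψp.toLinearMap * P * Ψp.symm.toLinearMap
      + Ψm.toLinearMap * (1 - P) * Ψm.symm.toLinearMap := by
    rw [hL, ha, hd]; simp only [Module.End.mul_eq_comp]; abel
  obtain ⟨hunit, hinv⟩ : IsUnit (1 + L) ∧ Ring.inverse (1 + L) =
      M * P * Minv * P + M * (1 - P) * Minv * (1 - P) := by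
    rw [h1L, hM, hMinv]
    have hVp {T} := Submodule.projection_mul_mul_projection_of_forall_mem (T := T) hc
    have hVm {T} := Submodule.projection_mul_mul_projection_of_forall_mem (T := T) hc.symm
    exact isUnit_conj_add_conj_and_inverse_eq (p := u Ψp) (m := u Ψm) (bp := u Ψbp) (bm := u Ψbm)
      (Units.ext hfact) (hP ▸ hVp hp) (hP ▸ hVp hp') (hP ▸ hVp hbp) (hP ▸ hVp hbp')
      (hQ ▸ hVm hm) (hQ ▸ hVm hm') (hQ ▸ hVm hbm) (hQ ▸ hVm hbm')
  have hEF : M * P * Minv + M * (1 - P) * Minv = 1 := by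
    rw [← add_mul, ← mul_add, add_sub_cancel, mul_one, hM, hMinv]
    exact (u Ψp * u Ψbm).mul_inv
  obtain ⟨h₁, h₂, h₃, h₄⟩ := blocks_one_sub_mul_add_mul
    (hP ▸ Submodule.isIdempotentElem_projection hc) (add_sub_cancel P 1) hEF
  rw [mul_inverse_one_add hunit, hinv]
  simp only [mul_assoc] at h₁ h₂ h₃ h₄ ⊢
  exact ⟨hunit, h₁, h₂, h₃, h₄⟩

/-- Finite-dimensional form of the correlation-kernel formula `K = L(1+L)⁻¹` expressed
via the solutions `Ψ₊`, `Ψ̄₋` of the direct and dual Riemann–Hilbert problems: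
with `M = Ψ₊ ∘ Ψ̄₋`, the operator `1 + L` is invertible and the four blocks of
`K = L(1+L)⁻¹` are `±Π_± M Π_∓ M⁻¹ Π_±` as stated. -/
theorem correlation_kernel_blocks
    (V : Type) [AddCommGroup V] [Module ℂ V] [FiniteDimensional ℂ V]
    (Vp Vm : Submodule ℂ V) (hc : IsCompl Vp Vm)
    (Ψp Ψm Ψbp Ψbm : V ≃ₗ[ℂ] V)
    (hp : ∀ x ∈ Vp, Ψp x ∈ Vp) (hp' : ∀ x ∈ Vp, Ψp.symm x ∈ Vp)
    (hbp : ∀ x ∈ Vp, Ψbp x ∈ Vp) (hbp' : ∀ x ∈ Vp, Ψbp.symm x ∈ Vp)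
    (hm : ∀ x ∈ Vm, Ψm x ∈ Vm) (hm' : ∀ x ∈ Vm, Ψm.symm x ∈ Vm)
    (hbm : ∀ x ∈ Vm, Ψbm x ∈ Vm) (hbm' : ∀ x ∈ Vm, Ψbm.symm x ∈ Vm)
    (hfact : Ψm.symm.toLinearMap ∘ₗ Ψp.toLinearMap
      = Ψbp.toLinearMap ∘ₗ Ψbm.symm.toLinearMap)
    (P a d L M Minv : Module.End ℂ V)
    (hP : P = Vp.subtype ∘ₗ Vp.linearProjOfIsCompl Vm hc)
    (ha : a = Ψp.toLinearMap ∘ₗ P ∘ₗ Ψp.symm.toLinearMap - P)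
    (hd : d = Ψm.toLinearMap ∘ₗ (1 - P : Module.End ℂ V) ∘ₗ Ψm.symm.toLinearMap
      - (1 - P : Module.End ℂ V))
    (hL : L = a + d)
    (hM : M = Ψp.toLinearMap ∘ₗ Ψbm.toLinearMap)
    (hMinv : Minv = Ψbm.symm.toLinearMap ∘ₗ Ψp.symm.toLinearMap) :
    IsUnit (1 + L) ∧
    P * (L * Ring.inverse (1 + L)) * P = P * M * (1 - P) * Minv * P ∧
    P * (L * Ring.inverse (1 + L)) * (1 - P) = -(P * M * (1 - P) * Minv * (1 - P)) ∧
    (1 - P) * (L * Ring.inverse (1 + L)) * P = -((1 - P) * M * P * Minv * P) ∧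
    (1 - P) * (L * Ring.inverse (1 + L)) * (1 - P) = (1 - P) * M * P * Minv * (1 - P) :=
  correlation_kernel_blocks_general V Vp Vm hc Ψp Ψm Ψbp Ψbm hp hp' hbp hbp' hm hm' hbm hbm' hfact P
    a d L M Minv hP ha hd hL hM hMinv
end
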